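/- arXiv:2007.03173 — 10 statements merged into one kernel-verified Lean document; each statement's English description precedes it below -/
import Mathlib

section
/- Let a, b : ℝ → ℝ be continuous functions such that b is bounded and there exists a₀ > 0 with a(u) ≥ a₀ for all u ∈ ℝ. Suppose x : ℝ → ℝ is differentiable, bounded, and satisfies x'(t) = b(t) - a(t) · x(t) for all t ∈ ℝ. Then for every t ∈ ℝ, x(t) = ∫_0^∞ b(t - s) · exp(-∫_{t-s}^t a(u) du) ds. -/
/-!
Along the history `s ↦ t - s`, the integrating factor turns the equation into
`d/ds [x (t - s) · e^{-∫_{t-s}^t a}] = -b (t - s) · e^{-∫_{t-s}^t a}`.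
Since `a ≥ a₀ > 0`, the survival factor `e^{-∫_{t-s}^t a}` is at most `e^{-a₀ s}`,
so, `b` and `x` being bounded, the right-hand side is integrable on `(0, ∞)` and the bracket
tends to `0` as `s → ∞`; the fundamental theorem of calculus on `(0, ∞)` then gives the formula.
-/

open MeasureTheory Filter Topology Real

theorem hasDerivAt_integral_lower {a : ℝ → ℝ} (ha : Continuous a) (t c : ℝ) :
    HasDerivAt (fun c => ∫ u in c..t, a u) (-a c) c :=
  intervalIntegral.integral_hasDerivAt_left (ha.intervalIntegrable _ _)
    (ha.stronglyMeasurableAtFilter _ _) ha.continuousAt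

section SurvivalFactor

variable {a : ℝ → ℝ} {a₀ : ℝ}

theorem exp_neg_integral_le_exp_neg_mul (ha : Continuous a) (halb : ∀ u, a₀ ≤ a u)
    (t : ℝ) {s : ℝ} (hs : 0 ≤ s) :
    exp (-∫ u in (t - s)..t, a u) ≤ exp (-(a₀ * s)) := by
  have hmono : ∫ _ in (t - s)..t, a₀ ≤ ∫ u in (t - s)..t, a u :=
    intervalIntegral.integral_mono_on (by linarith) intervalIntegrable_const
      (ha.intervalIntegrable _ _) fun u _ => halb u
  rw [intervalIntegral.integral_const, smul_eq_mul, sub_sub_cancel] at hmono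
  exact exp_le_exp.2 (by linarith)

theorem abs_mul_exp_neg_integral_le {f : ℝ → ℝ} {C : ℝ} (hf : ∀ t, |f t| ≤ C)
    (ha : Continuous a) (halb : ∀ u, a₀ ≤ a u) (t : ℝ) {s : ℝ} (hs : 0 ≤ s) :
    |f (t - s) * exp (-∫ u in (t - s)..t, a u)| ≤ C * exp (-(a₀ * s)) := by
  rw [abs_mul, abs_of_pos (exp_pos _)]
  exact mul_le_mul (hf _) (exp_neg_integral_le_exp_neg_mul ha halb t hs) (exp_pos _).le
    ((abs_nonneg _).trans (hf 0))

theorem integrableOn_Ioi_mul_exp_neg_integral {f : ℝ → ℝ} (hf : Continuous f)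
    (hfbdd : ∃ C, ∀ t, |f t| ≤ C) (ha : Continuous a) (ha₀ : 0 < a₀)
    (halb : ∀ u, a₀ ≤ a u) (t : ℝ) :
    IntegrableOn (fun s => f (t - s) * exp (-∫ u in (t - s)..t, a u)) (Set.Ioi 0) := by
  obtain ⟨C, hC⟩ := hfbdd
  have hcont : Continuous fun s => f (t - s) * exp (-∫ u in (t - s)..t, a u) := by
    have hA : Continuous fun c => ∫ u in c..t, a u :=
      continuous_iff_continuousAt.2 fun c => (hasDerivAt_integral_lower ha t c).continuousAt
    fun_prop
  refine Integrable.mono' ((exp_neg_integrableOn_Ioi 0 ha₀).const_mul C)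
    hcont.aestronglyMeasurable ?_
  filter_upwards [ae_restrict_mem measurableSet_Ioi] with s hs
  simpa only [neg_mul, norm_eq_abs] using abs_mul_exp_neg_integral_le hC ha halb t hs.le

theorem tendsto_mul_exp_neg_integral_atTop {f : ℝ → ℝ} (hfbdd : ∃ C, ∀ t, |f t| ≤ C)
    (ha : Continuous a) (ha₀ : 0 < a₀) (halb : ∀ u, a₀ ≤ a u) (t : ℝ) :
    Tendsto (fun s => f (t - s) * exp (-∫ u in (t - s)..t, a u)) atTop (𝓝 0) := by
  obtain ⟨C, hC⟩ := hfbdd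
  have hdecay : Tendsto (fun s => C * exp (-(a₀ * s))) atTop (𝓝 0) := by
    simpa using (tendsto_exp_neg_atTop_nhds_zero.comp
      (tendsto_id.const_mul_atTop ha₀)).const_mul C
  refine squeeze_zero_norm' ?_ hdecay
  filter_upwards [eventually_ge_atTop 0] with s hs
  exact abs_mul_exp_neg_integral_le hC ha halb t hs

end SurvivalFactor

theorem hasDerivAt_mul_exp_neg_integral {a b x : ℝ → ℝ} (ha : Continuous a)
    (hx : ∀ t, HasDerivAt x (b t - a t * x t) t) (t s : ℝ) :
    HasDerivAt (fun s => x (t - s) * exp (-∫ u in (t - s)..t, a u))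
      (-(b (t - s) * exp (-∫ u in (t - s)..t, a u))) s := by
  have hF : HasDerivAt (fun c => x c * exp (-∫ u in c..t, a u))
      (b (t - s) * exp (-∫ u in (t - s)..t, a u)) (t - s) :=
    ((hx (t - s)).mul (hasDerivAt_integral_lower ha t (t - s)).fun_neg.exp).congr_deriv
      (by ring)
  exact (hF.comp s ((hasDerivAt_id s).const_sub t)).congr_deriv (by ring)

/-- A bounded solution on all of `ℝ` of `x' = b - a·x`, with `b` bounded and
`a ≥ a₀ > 0`, equals the variation-of-constants integral over its history. -/
theorem stmt1
    (a b : ℝ → ℝ) (ha : Continuous a) (hb : Continuous b)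
    (hbbdd : ∃ C, ∀ t, |b t| ≤ C)
    (a₀ : ℝ) (ha₀ : 0 < a₀) (halb : ∀ u, a₀ ≤ a u)
    (x : ℝ → ℝ)
    (hxbdd : ∃ C, ∀ t, |x t| ≤ C)
    (hx : ∀ t, HasDerivAt x (b t - a t * x t) t) :
    ∀ t : ℝ, x t = ∫ s in Set.Ioi (0 : ℝ),
      b (t - s) * Real.exp (-∫ u in (t - s)..t, a u) := by
  intro t
  have hFTC := integral_Ioi_of_hasDerivAt_of_tendsto'
    (fun s _ => (hasDerivAt_mul_exp_neg_integral ha hx t s).neg.congr_deriv (neg_neg _))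
    (integrableOn_Ioi_mul_exp_neg_integral hb hbbdd ha ha₀ halb t)
    (tendsto_mul_exp_neg_integral_atTop hxbdd ha ha₀ halb t).neg
  simpa using hFTC.symm
end

section
/- Let n ≥ 2, let f_1, ..., f_n : ℝ → ℝ be continuous and bounded, let K_1, ..., K_n be probability density functions on [0,∞), and let μ : ℝ → ℝ be continuous with μ(y) ≥ μ₀ for all y, for some μ₀ > 0. Suppose x_1, ..., x_n : ℝ → ℝ are bounded differentiable functions satisfying, for every t ∈ ℝ and every i ∈ {1, ..., n} (with the convention x_0 := x_n), x_i'(t) = f_i(∫_0^∞ x_{i-1}(t - φ) K_i(φ) dφ) - μ(x_n(t)) · x_i(t). Then for every i ∈ {1, ..., n} and every t ∈ ℝ, x_i(t) = ∫_0^∞ f_i(∫_0^∞ x_{i-1}(t - s - φ) K_i(φ) dφ) · exp(-∫_{t-s}^t μ(x_n(u)) du) ds. -/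
/-!
Each compartment solves a scalar linear equation `y' = g - a y` with bounded forcing
`g(τ) = f_i(∫ x_{i-1}(τ - φ) K_i(φ) dφ)` and damping `a(τ) = μ(x_n(τ)) ≥ μ₀ > 0`.
Variation of constants on `[t - S, t]` gives
`y(t) = ∫_0^S g(t - s) e^{-∫_{t-s}^t a} ds + y(t - S) e^{-∫_{t-S}^t a}`;
the damping makes the weight decay like `e^{-μ₀ s}`, so the integrand is integrable on
`(0, ∞)` and, `y` being bounded, the boundary term vanishes as `S → ∞`.
-/

open MeasureTheory Filter Topology Set

noncomputable section

def decayFactor (a : ℝ → ℝ) (t s : ℝ) : ℝ :=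
  Real.exp (-∫ u in (t - s)..t, a u)

section DecayFactor

variable {a : ℝ → ℝ} {μ₀ : ℝ}

theorem decayFactor_pos (t s : ℝ) : 0 < decayFactor a t s := Real.exp_pos _

@[simp]
theorem decayFactor_zero (t : ℝ) : decayFactor a t 0 = 1 := by
  simp [decayFactor]

theorem hasDerivAt_decayFactor (ha : Continuous a) (t s : ℝ) :
    HasDerivAt (decayFactor a t) (-(a (t - s) * decayFactor a t s)) s := by
  have hlower : HasDerivAt (fun s => ∫ u in t..(t - s), a u) (-a (t - s)) s :=
    (ha.integral_hasStrictDerivAt t (t - s)).hasDerivAt.comp_const_sub t s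
  have hflip : (fun s => ∫ u in (t - s)..t, a u) = fun s => -∫ u in t..(t - s), a u :=
    funext fun s => intervalIntegral.integral_symm t (t - s)
  have hexponent : HasDerivAt (fun s => ∫ u in (t - s)..t, a u) (a (t - s)) s := by
    rw [hflip]
    simpa using hlower.fun_neg
  exact hexponent.fun_neg.exp.congr_deriv (by rw [decayFactor]; ring)

theorem continuous_decayFactor (ha : Continuous a) (t : ℝ) : Continuous (decayFactor a t) :=
  continuous_iff_continuousAt.2 fun s => (hasDerivAt_decayFactor ha t s).continuousAt

theorem decayFactor_le_exp (ha : Continuous a) (haμ₀ : ∀ u, μ₀ ≤ a u) (t : ℝ) {s : ℝ}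
    (hs : 0 ≤ s) : decayFactor a t s ≤ Real.exp (-(μ₀ * s)) := by
  refine Real.exp_le_exp.2 (neg_le_neg ?_)
  calc μ₀ * s = ∫ _ in (t - s)..t, μ₀ := by simp [mul_comm]
    _ ≤ ∫ u in (t - s)..t, a u :=
      intervalIntegral.integral_mono_on (by linarith) intervalIntegrable_const
        (ha.intervalIntegrable _ _) fun u _ => haμ₀ u

end DecayFactor

section LinearEquation

variable {a g y : ℝ → ℝ} {μ₀ : ℝ}

theorem eq_intervalIntegral_add_mul_decayFactor
    (ha : Continuous a) (hy : ∀ τ, HasDerivAt y (g τ - a τ * y τ) τ) (t : ℝ) {S : ℝ}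
    (hint : IntervalIntegrable (fun s => g (t - s) * decayFactor a t s) volume 0 S) :
    y t = (∫ s in (0 : ℝ)..S, g (t - s) * decayFactor a t s)
      + y (t - S) * decayFactor a t S := by
  have hderiv : ∀ s, HasDerivAt (fun s => y (t - s) * decayFactor a t s)
      (-(g (t - s) * decayFactor a t s)) s := fun s =>
    (((hy (t - s)).comp_const_sub t s).fun_mul
      (hasDerivAt_decayFactor ha t s)).congr_deriv (by ring)
  have hftc := intervalIntegral.integral_eq_sub_of_hasDerivAt (fun s _ => hderiv s) hint.neg
  rw [intervalIntegral.integral_neg] at hftc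
  simp only [sub_zero, decayFactor_zero, mul_one] at hftc
  linarith

theorem integrableOn_Ioi_mul_decayFactor
    (ha : Continuous a) (hμ₀ : 0 < μ₀) (haμ₀ : ∀ u, μ₀ ≤ a u)
    (hg_meas : Measurable g) (hg_bdd : ∃ C, ∀ τ, |g τ| ≤ C) (t : ℝ) :
    IntegrableOn (fun s => g (t - s) * decayFactor a t s) (Ioi 0) := by
  obtain ⟨C, hC⟩ := hg_bdd
  refine Integrable.mono' ((exp_neg_integrableOn_Ioi 0 hμ₀).const_mul C)
    (((hg_meas.comp (measurable_const.sub measurable_id)).aestronglyMeasurable.mul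
      (continuous_decayFactor ha t).aestronglyMeasurable).restrict) ?_
  filter_upwards [ae_restrict_mem measurableSet_Ioi] with s hs
  rw [Real.norm_eq_abs, abs_mul, abs_of_pos (decayFactor_pos t s), neg_mul]
  exact mul_le_mul (hC _) (decayFactor_le_exp ha haμ₀ t hs.le)
    (decayFactor_pos t s).le ((abs_nonneg _).trans (hC 0))

theorem tendsto_mul_decayFactor_atTop (ha : Continuous a) (hμ₀ : 0 < μ₀)
    (haμ₀ : ∀ u, μ₀ ≤ a u) (hy_bdd : ∃ C, ∀ τ, |y τ| ≤ C) (t : ℝ) :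
    Tendsto (fun S => y (t - S) * decayFactor a t S) atTop (𝓝 0) := by
  obtain ⟨C, hC⟩ := hy_bdd
  have hexp : Tendsto (fun S => C * Real.exp (-(μ₀ * S))) atTop (𝓝 0) := by
    simpa using (Real.tendsto_exp_neg_atTop_nhds_zero.comp
      (tendsto_id.const_mul_atTop hμ₀)).const_mul C
  refine squeeze_zero_norm' ?_ hexp
  filter_upwards [eventually_ge_atTop 0] with S hS
  rw [Real.norm_eq_abs, abs_mul, abs_of_pos (decayFactor_pos t S)]
  exact mul_le_mul (hC _) (decayFactor_le_exp ha haμ₀ t hS)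
    (decayFactor_pos t S).le ((abs_nonneg _).trans (hC 0))

theorem eq_integral_Ioi_mul_decayFactor
    (ha : Continuous a) (hμ₀ : 0 < μ₀) (haμ₀ : ∀ u, μ₀ ≤ a u)
    (hg_bdd : ∃ C, ∀ τ, |g τ| ≤ C) (hy_bdd : ∃ C, ∀ τ, |y τ| ≤ C)
    (hy : ∀ τ, HasDerivAt y (g τ - a τ * y τ) τ) (t : ℝ) :
    y t = ∫ s in Ioi 0, g (t - s) * decayFactor a t s := by
  -- No regularity of `g` is assumed: it is measurable as `y' + a y`.
  have hg_meas : Measurable g := by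
    have hy_cont : Continuous y :=
      continuous_iff_continuousAt.2 fun τ => (hy τ).continuousAt
    have hg_eq : g = fun τ => deriv y τ + a τ * y τ :=
      funext fun τ => by rw [(hy τ).deriv]; ring
    rw [hg_eq]
    exact (measurable_deriv y).add (ha.mul hy_cont).measurable
  have hint := integrableOn_Ioi_mul_decayFactor ha hμ₀ haμ₀ hg_meas hg_bdd t
  have hsum := (intervalIntegral_tendsto_integral_Ioi 0 hint tendsto_id).add
    (tendsto_mul_decayFactor_atTop ha hμ₀ haμ₀ hy_bdd t)
  rw [add_zero] at hsum
  refine tendsto_nhds_unique (tendsto_const_nhds.congr' ?_) hsum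
  filter_upwards [eventually_ge_atTop 0] with S hS
  refine eq_intervalIntegral_add_mul_decayFactor ha hy t ?_
  exact (intervalIntegrable_iff_integrableOn_Ioc_of_le hS).2 (hint.mono_set Ioc_subset_Ioi_self)

end LinearEquation

end

theorem stmt2_general
    (n : ℕ)
    (f K : ℕ → ℝ → ℝ) (μ : ℝ → ℝ) (μ₀ : ℝ)
    (hfbdd : ∀ i, 1 ≤ i → i ≤ n → ∃ C, ∀ y, |f i y| ≤ C)
    (hμcont : Continuous μ) (hμ₀ : 0 < μ₀) (hμlb : ∀ y, μ₀ ≤ μ y)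
    (x : ℕ → ℝ → ℝ)
    (hxbdd : ∀ i, 1 ≤ i → i ≤ n → ∃ C, ∀ t, |x i t| ≤ C)
    (hode : ∀ i, 1 ≤ i → i ≤ n → ∀ t : ℝ,
      HasDerivAt (x i)
        (f i (∫ φ in Set.Ioi (0 : ℝ), x (i - 1) (t - φ) * K i φ)
          - μ (x n t) * x i t) t) :
    ∀ i, 1 ≤ i → i ≤ n → ∀ t : ℝ,
      x i t = ∫ s in Set.Ioi (0 : ℝ),
        f i (∫ φ in Set.Ioi (0 : ℝ), x (i - 1) (t - s - φ) * K i φ)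
          * Real.exp (-∫ u in (t - s)..t, μ (x n u)) := by
  intro i hi hin t
  have hxn_cont : Continuous (x n) := continuous_iff_continuousAt.2 fun u =>
    (hode n (hi.trans hin) le_rfl u).continuousAt
  obtain ⟨C, hC⟩ := hfbdd i hi hin
  exact eq_integral_Ioi_mul_decayFactor (hμcont.comp hxn_cont) hμ₀ (fun u => hμlb (x n u))
    ⟨C, fun τ => hC _⟩ (hxbdd i hi hin) (hode i hi hin) t

/-- Lemma 2.1: each compartment of the cyclic distributed-delay system is given
by the variation-of-constants integral representation over its infinite
history.  Compartments are indexed `1, …, n` with the convention `x 0 = x n`. -/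
theorem stmt2
    (n : ℕ) (hn : 2 ≤ n)
    (f K : ℕ → ℝ → ℝ) (μ : ℝ → ℝ) (μ₀ : ℝ)
    (hfcont : ∀ i, 1 ≤ i → i ≤ n → Continuous (f i))
    (hfbdd : ∀ i, 1 ≤ i → i ≤ n → ∃ C, ∀ y, |f i y| ≤ C)
    (hKmeas : ∀ i, 1 ≤ i → i ≤ n → Measurable (K i))
    (hKnonneg : ∀ i, 1 ≤ i → i ≤ n → ∀ φ : ℝ, 0 ≤ φ → 0 ≤ K i φ)
    (hKint : ∀ i, 1 ≤ i → i ≤ n → ∫ φ in Set.Ioi (0 : ℝ), K i φ = 1)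
    (hμcont : Continuous μ) (hμ₀ : 0 < μ₀) (hμlb : ∀ y, μ₀ ≤ μ y)
    (x : ℕ → ℝ → ℝ)
    (hxbdd : ∀ i, 1 ≤ i → i ≤ n → ∃ C, ∀ t, |x i t| ≤ C)
    (hx0 : x 0 = x n)
    (hode : ∀ i, 1 ≤ i → i ≤ n → ∀ t : ℝ,
      HasDerivAt (x i)
        (f i (∫ φ in Set.Ioi (0 : ℝ), x (i - 1) (t - φ) * K i φ)
          - μ (x n t) * x i t) t) :
    ∀ i, 1 ≤ i → i ≤ n → ∀ t : ℝ,
      x i t = ∫ s in Set.Ioi (0 : ℝ),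
        f i (∫ φ in Set.Ioi (0 : ℝ), x (i - 1) (t - s - φ) * K i φ)
          * Real.exp (-∫ u in (t - s)..t, μ (x n u)) :=
  stmt2_general n f K μ μ₀ hfbdd hμcont hμ₀ hμlb x hxbdd hode
end

section
/- Let f_1, f_2, f_3 : ℝ → ℝ be continuous and bounded, let K_1 be a probability density function on [0,∞), and let μ : ℝ → ℝ be continuous with μ(y) ≥ μ₀ for all y, for some μ₀ > 0. Suppose x_1, x_2, x_3 : ℝ → ℝ are bounded differentiable functions satisfying, for all t ∈ ℝ: x_1'(t) = f_1(∫_0^∞ x_3(t - φ) K_1(φ) dφ) - μ(x_3(t)) x_1(t); x_2'(t) = f_2(x_1(t)) - μ(x_3(t)) x_2(t); x_3'(t) = f_3(x_2(t)) - μ(x_3(t)) x_3(t). Then for every t ∈ ℝ, x_3'(t) = f_3( ∫_{-∞}^t f_2( ∫_{-∞}^r f_1( ∫_0^∞ x_3(σ - φ) K_1(φ) dφ ) · exp(-∫_σ^r μ(x_3(u)) du) dσ ) · exp(-∫_r^t μ(x_3(u)) du) dr ) - μ(x_3(t)) x_3(t). -/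
/-!
With `m := μ ∘ x₃ ≥ μ₀ > 0`, each equation `xᵢ' = gᵢ - m xᵢ` is linear in `xᵢ`. Multiplying by the
integrating factor `exp (-∫_s^t m)` and integrating over `[s, t]` gives
`xᵢ t - xᵢ s · exp (-∫_s^t m) = ∫_s^t gᵢ(σ) exp (-∫_σ^t m) dσ`; the boundary term is at most
`C e^{-μ₀ (t - s)}` because `xᵢ` is bounded, so letting `s → -∞` expresses `xᵢ t` through the history
of `gᵢ` alone. Doing this for `x₁` and then `x₂` and substituting into the equation for `x₃` gives
the scalar equation.
-/

open MeasureTheory Set Filter Topology Real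

section VariationOfConstants

variable {m : ℝ → ℝ} {μ₀ : ℝ}

lemma exp_neg_integral_le_of_le {σ t : ℝ} (hm : IntervalIntegrable m volume σ t)
    (hμ : ∀ u, μ₀ ≤ m u) (hσt : σ ≤ t) :
    exp (-∫ u in σ..t, m u) ≤ exp (-(μ₀ * t)) * exp (μ₀ * σ) := by
  have hlow : μ₀ * (t - σ) ≤ ∫ u in σ..t, m u := by
    calc μ₀ * (t - σ) = ∫ _ in σ..t, μ₀ := by simp [mul_comm]
      _ ≤ ∫ u in σ..t, m u :=
        intervalIntegral.integral_mono_on hσt intervalIntegrable_const hm fun u _ => hμ u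
  rw [← exp_add]
  exact exp_le_exp.2 (by linarith)

lemma abs_mul_exp_neg_integral_le_s3 {f : ℝ → ℝ} {C σ t : ℝ} (hf : ∀ s, |f s| ≤ C)
    (hm : IntervalIntegrable m volume σ t) (hμ : ∀ u, μ₀ ≤ m u) (hσt : σ ≤ t) :
    |f σ * exp (-∫ u in σ..t, m u)| ≤ C * exp (-(μ₀ * t)) * exp (μ₀ * σ) := by
  rw [abs_mul, abs_of_pos (exp_pos _), mul_assoc]
  exact mul_le_mul (hf σ) (exp_neg_integral_le_of_le hm hμ hσt) (exp_pos _).le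
    ((abs_nonneg _).trans (hf σ))

lemma hasDerivAt_exp_neg_integral (hm : Continuous m) (s t : ℝ) :
    HasDerivAt (fun σ => exp (-∫ u in σ..t, m u)) (exp (-∫ u in s..t, m u) * m s) s := by
  simpa using (intervalIntegral.integral_hasDerivAt_left (hm.intervalIntegrable s t)
    (hm.stronglyMeasurableAtFilter _ _) hm.continuousAt).neg.exp

lemma integrableOn_Iic_mul_exp_neg_integral {g : ℝ → ℝ} (hg : Measurable g)
    (hgb : ∃ C, ∀ s, |g s| ≤ C) (hm : Continuous m) (hμ₀ : 0 < μ₀) (hμ : ∀ u, μ₀ ≤ m u)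
    (t : ℝ) :
    IntegrableOn (fun σ => g σ * exp (-∫ u in σ..t, m u)) (Iic t) := by
  obtain ⟨C, hC⟩ := hgb
  have hw : Continuous fun σ => exp (-∫ u in σ..t, m u) :=
    continuous_iff_continuousAt.2 fun s => (hasDerivAt_exp_neg_integral hm s t).continuousAt
  refine Integrable.mono' ((integrableOn_exp_mul_Iic hμ₀ t).const_mul (C * exp (-(μ₀ * t))))
    (hg.aestronglyMeasurable.mul hw.aestronglyMeasurable).restrict ?_
  filter_upwards [ae_restrict_mem measurableSet_Iic] with σ hσ
  exact abs_mul_exp_neg_integral_le_s3 hC (hm.intervalIntegrable σ t) hμ hσ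

lemma tendsto_mul_exp_neg_integral_atBot {x : ℝ → ℝ} (hxb : ∃ C, ∀ s, |x s| ≤ C)
    (hm : Continuous m) (hμ₀ : 0 < μ₀) (hμ : ∀ u, μ₀ ≤ m u) (t : ℝ) :
    Tendsto (fun s => x s * exp (-∫ u in s..t, m u)) atBot (𝓝 0) := by
  obtain ⟨C, hC⟩ := hxb
  have hdecay : Tendsto (fun s => C * exp (-(μ₀ * t)) * exp (μ₀ * s)) atBot (𝓝 0) := by
    simpa using (tendsto_exp_atBot.comp (tendsto_id.const_mul_atBot hμ₀)).const_mul
      (C * exp (-(μ₀ * t)))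
  refine squeeze_zero_norm' ?_ hdecay
  filter_upwards [eventually_le_atBot t] with s hs
  exact abs_mul_exp_neg_integral_le_s3 hC (hm.intervalIntegrable s t) hμ hs

theorem eq_integral_Iic_mul_exp_neg_integral {g x : ℝ → ℝ} (hgb : ∃ C, ∀ s, |g s| ≤ C)
    (hxb : ∃ C, ∀ s, |x s| ≤ C) (hm : Continuous m) (hμ₀ : 0 < μ₀) (hμ : ∀ u, μ₀ ≤ m u)
    (hx : ∀ s, HasDerivAt x (g s - m s * x s) s) (t : ℝ) :
    x t = ∫ σ in Iic t, g σ * exp (-∫ u in σ..t, m u) := by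
  have hxc : Continuous x := continuous_iff_continuousAt.2 fun s => (hx s).continuousAt
  -- `g` need not be continuous: it is measurable as `x' + m x`, derivatives being measurable.
  have hg : Measurable g := by
    have : g = deriv x + m * x := funext fun s => by simp [(hx s).deriv]
    rw [this]
    exact (measurable_deriv x).add (hm.measurable.mul hxc.measurable)
  set F := fun s => x s * exp (-∫ u in s..t, m u)
  have hF : ∀ s, HasDerivAt F (g s * exp (-∫ u in s..t, m u)) s := fun s =>
    ((hx s).mul (hasDerivAt_exp_neg_integral hm s t)).congr_deriv (by ring)
  have hint := integrableOn_Iic_mul_exp_neg_integral hg hgb hm hμ₀ hμ t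
  have hFTC : ∀ s ≤ t, ∫ σ in s..t, g σ * exp (-∫ u in σ..t, m u) = x t - F s := fun s hs => by
    rw [intervalIntegral.integral_eq_sub_of_hasDerivAt (fun σ _ => hF σ)
      ((intervalIntegrable_iff_integrableOn_Ioc_of_le hs).2 (hint.mono_set Ioc_subset_Iic_self))]
    simp [F]
  have hlim : Tendsto (fun s => x t - F s) atBot (𝓝 (x t)) := by
    simpa using tendsto_const_nhds.sub (tendsto_mul_exp_neg_integral_atBot hxb hm hμ₀ hμ t)
  refine tendsto_nhds_unique (hlim.congr' ?_)
    (intervalIntegral_tendsto_integral_Iic t hint tendsto_id)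
  filter_upwards [eventually_le_atBot t] with s hs
  exact (hFTC s hs).symm

end VariationOfConstants

theorem stmt3_general
    (f₁ f₂ f₃ : ℝ → ℝ) (K₁ : ℝ → ℝ) (μ : ℝ → ℝ) (μ₀ : ℝ)
    (hf₁b : ∃ C, ∀ y, |f₁ y| ≤ C) (hf₂b : ∃ C, ∀ y, |f₂ y| ≤ C)
    (hμcont : Continuous μ) (hμ₀ : 0 < μ₀) (hμlb : ∀ y, μ₀ ≤ μ y)
    (x₁ x₂ x₃ : ℝ → ℝ)
    (hx₁b : ∃ C, ∀ t, |x₁ t| ≤ C) (hx₂b : ∃ C, ∀ t, |x₂ t| ≤ C)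
    (h1 : ∀ t : ℝ, HasDerivAt x₁
      (f₁ (∫ φ in Set.Ioi (0 : ℝ), x₃ (t - φ) * K₁ φ) - μ (x₃ t) * x₁ t) t)
    (h2 : ∀ t : ℝ, HasDerivAt x₂ (f₂ (x₁ t) - μ (x₃ t) * x₂ t) t)
    (h3 : ∀ t : ℝ, HasDerivAt x₃ (f₃ (x₂ t) - μ (x₃ t) * x₃ t) t) :
    ∀ t : ℝ, HasDerivAt x₃
      (f₃ (∫ r in Set.Iic t,
            f₂ (∫ σ in Set.Iic r,
                  f₁ (∫ φ in Set.Ioi (0 : ℝ), x₃ (σ - φ) * K₁ φ)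
                    * Real.exp (-∫ u in σ..r, μ (x₃ u)))
              * Real.exp (-∫ u in r..t, μ (x₃ u)))
        - μ (x₃ t) * x₃ t) t := by
  intro t
  have hm : Continuous fun u => μ (x₃ u) :=
    hμcont.comp (continuous_iff_continuousAt.2 fun s => (h3 s).continuousAt)
  have hx₁ := eq_integral_Iic_mul_exp_neg_integral (hf₁b.imp fun _ hC _ => hC _) hx₁b hm hμ₀
    (fun _ => hμlb _) h1
  have hx₂ := eq_integral_Iic_mul_exp_neg_integral (hf₂b.imp fun _ hC _ => hC _) hx₂b hm hμ₀
    (fun _ => hμlb _) h2 t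
  simp_rw [← hx₁, ← hx₂]
  exact h3 t

/-- The `n = 3` reduction: a three-compartment cyclic system with one
distributed delay reduces to a scalar distributed delay differential equation
for the last compartment `x₃`. -/
theorem stmt3
    (f₁ f₂ f₃ : ℝ → ℝ) (K₁ : ℝ → ℝ) (μ : ℝ → ℝ) (μ₀ : ℝ)
    (hf₁ : Continuous f₁) (hf₂ : Continuous f₂) (hf₃ : Continuous f₃)
    (hf₁b : ∃ C, ∀ y, |f₁ y| ≤ C) (hf₂b : ∃ C, ∀ y, |f₂ y| ≤ C)
    (hf₃b : ∃ C, ∀ y, |f₃ y| ≤ C)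
    (hKmeas : Measurable K₁) (hKnonneg : ∀ φ : ℝ, 0 ≤ φ → 0 ≤ K₁ φ)
    (hKint : ∫ φ in Set.Ioi (0 : ℝ), K₁ φ = 1)
    (hμcont : Continuous μ) (hμ₀ : 0 < μ₀) (hμlb : ∀ y, μ₀ ≤ μ y)
    (x₁ x₂ x₃ : ℝ → ℝ)
    (hx₁b : ∃ C, ∀ t, |x₁ t| ≤ C) (hx₂b : ∃ C, ∀ t, |x₂ t| ≤ C)
    (hx₃b : ∃ C, ∀ t, |x₃ t| ≤ C)
    (h1 : ∀ t : ℝ, HasDerivAt x₁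
      (f₁ (∫ φ in Set.Ioi (0 : ℝ), x₃ (t - φ) * K₁ φ) - μ (x₃ t) * x₁ t) t)
    (h2 : ∀ t : ℝ, HasDerivAt x₂ (f₂ (x₁ t) - μ (x₃ t) * x₂ t) t)
    (h3 : ∀ t : ℝ, HasDerivAt x₃ (f₃ (x₂ t) - μ (x₃ t) * x₃ t) t) :
    ∀ t : ℝ, HasDerivAt x₃
      (f₃ (∫ r in Set.Iic t,
            f₂ (∫ σ in Set.Iic r,
                  f₁ (∫ φ in Set.Ioi (0 : ℝ), x₃ (σ - φ) * K₁ φ)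
                    * Real.exp (-∫ u in σ..r, μ (x₃ u)))
              * Real.exp (-∫ u in r..t, μ (x₃ u)))
        - μ (x₃ t) * x₃ t) t :=
  stmt3_general f₁ f₂ f₃ K₁ μ μ₀ hf₁b hf₂b hμcont hμ₀ hμlb x₁ x₂ x₃ hx₁b hx₂b h1 h2 h3
end

section
/- Let n ≥ 2, let f_1, ..., f_n : ℝ → ℝ be continuous and bounded, let K_1, ..., K_n be probability density functions on [0,∞), and let μ : ℝ → ℝ be continuous with μ(y) ≥ μ₀ for all y, for some μ₀ > 0. For a bounded continuous function y : ℝ → ℝ define recursively G_0[y] = y and, for i = 1, ..., n-1, G_i[y](t) = ∫_0^∞ f_i( ∫_0^∞ G_{i-1}[y](t - s - φ) K_i(φ) dφ ) · exp(-∫_{t-s}^t μ(y(u)) du) ds. Suppose x_1, ..., x_n : ℝ → ℝ are bounded differentiable functions satisfying, for every t ∈ ℝ and every i ∈ {1, ..., n} (with the convention x_0 := x_n), x_i'(t) = f_i(∫_0^∞ x_{i-1}(t - φ) K_i(φ) dφ) - μ(x_n(t)) x_i(t). Then for every t ∈ ℝ, x_n'(t) = f_n( ∫_0^∞ G_{n-1}[x_n](t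 - φ) K_n(φ) dφ ) - μ(x_n(t)) x_n(t). -/
/-! Each compartment solves a linear equation `x_i' = g_i - μ(x_n) x_i` whose coefficient is
bounded below by `μ₀ > 0`, so a bounded solution is the variation-of-constants integral over the
whole past: `s ↦ x_i(t - s) exp(-∫_{t-s}^t μ(x_n))` has derivative `-g_i(t - s) exp(…)` and
decays like `exp(-μ₀ s)`. Starting from `x_0 = x_n` and applying
this to `x_1, …, x_{n-1}` in turn expresses `x_i` as `G_i[x_n]`; substituting `G_{n-1}[x_n]`
for `x_{n-1}` in the equation of `x_n` gives the scalar equation. -/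

open MeasureTheory

/-- The nested functionals `G_i` of the generalized linear chain technique:
`G_0[y] = y` and
`G_i[y](t) = ∫_0^∞ f_i(∫_0^∞ G_{i-1}[y](t-s-φ) K_i(φ) dφ) exp(-∫_{t-s}^t μ(y(u)) du) ds`. -/
noncomputable def cyclicG (f K : ℕ → ℝ → ℝ) (μ : ℝ → ℝ) : ℕ → (ℝ → ℝ) → ℝ → ℝ
  | 0, y, t => y t
  | i + 1, y, t =>
      ∫ s in Set.Ioi (0 : ℝ),
        f (i + 1) (∫ φ in Set.Ioi (0 : ℝ), cyclicG f K μ i y (t - s - φ) * K (i + 1) φ)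
          * Real.exp (-∫ u in (t - s)..t, μ (y u))

open Set Filter Topology

section VariationOfConstants

variable {m : ℝ → ℝ} {μ₀ t : ℝ}

theorem hasDerivAt_exp_neg_integral_sub (hm : Continuous m) (s : ℝ) :
    HasDerivAt (fun s => Real.exp (-∫ u in (t - s)..t, m u))
      (-(m (t - s) * Real.exp (-∫ u in (t - s)..t, m u))) s := by
  have hlower : HasDerivAt (fun a => ∫ u in a..t, m u) (-m (t - s)) (t - s) :=
    intervalIntegral.integral_hasDerivAt_left (hm.intervalIntegrable _ _)
      hm.stronglyMeasurable.stronglyMeasurableAtFilter hm.continuousAt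
  have hcomp := hlower.comp s ((hasDerivAt_id s).const_sub t)
  exact hcomp.neg.exp.congr_deriv (by simp only [Pi.neg_apply, Function.comp_apply]; ring)

theorem exp_neg_integral_sub_le (hm : Continuous m) (hmlb : ∀ u, μ₀ ≤ m u) {s : ℝ}
    (hs : 0 ≤ s) : Real.exp (-∫ u in (t - s)..t, m u) ≤ Real.exp (-(μ₀ * s)) := by
  have hmono : ∫ _ in (t - s)..t, μ₀ ≤ ∫ u in (t - s)..t, m u :=
    intervalIntegral.integral_mono_on (by linarith) intervalIntegrable_const
      (hm.intervalIntegrable _ _) fun u _ => hmlb u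
  rw [intervalIntegral.integral_const, smul_eq_mul, sub_sub_cancel, mul_comm] at hmono
  exact Real.exp_le_exp.mpr (neg_le_neg hmono)

theorem abs_mul_exp_neg_integral_sub_le (hm : Continuous m) (hmlb : ∀ u, μ₀ ≤ m u)
    {h : ℝ → ℝ} {C : ℝ} (hh : ∀ τ, |h τ| ≤ C) {s : ℝ} (hs : 0 ≤ s) :
    |h (t - s) * Real.exp (-∫ u in (t - s)..t, m u)| ≤ C * Real.exp (-(μ₀ * s)) := by
  rw [abs_mul, Real.abs_exp]
  exact mul_le_mul (hh _) (exp_neg_integral_sub_le hm hmlb hs) (Real.exp_pos _).le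
    ((abs_nonneg _).trans (hh 0))

theorem eq_integral_Ioi_mul_exp_of_hasDerivAt {x g : ℝ → ℝ} {Cx Cg : ℝ} (hμ₀ : 0 < μ₀)
    (hm : Continuous m) (hmlb : ∀ u, μ₀ ≤ m u) (hg : Continuous g) (hgb : ∀ τ, |g τ| ≤ Cg)
    (hxb : ∀ τ, |x τ| ≤ Cx) (hx : ∀ τ, HasDerivAt x (g τ - m τ * x τ) τ) :
    x t = ∫ s in Ioi (0 : ℝ), g (t - s) * Real.exp (-∫ u in (t - s)..t, m u) := by
  set w : ℝ → ℝ := fun s => Real.exp (-∫ u in (t - s)..t, m u)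
  have hderiv : ∀ s, HasDerivAt (fun s => x (t - s) * w s) (-(g (t - s) * w s)) s := by
    intro s
    have hxs := (hx (t - s)).comp s ((hasDerivAt_id s).const_sub t)
    exact (hxs.mul (hasDerivAt_exp_neg_integral_sub hm s)).congr_deriv
      (by simp only [Function.comp_apply, w]; ring)
  have hdecay : Tendsto (fun s => x (t - s) * w s) atTop (𝓝 0) := by
    have hexp : Tendsto (fun s => Cx * Real.exp (-(μ₀ * s))) atTop (𝓝 0) := by
      simpa only [mul_zero, Function.comp_def, id] using (Real.tendsto_exp_neg_atTop_nhds_zero.comp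
        (tendsto_id.const_mul_atTop hμ₀)).const_mul Cx
    refine squeeze_zero_norm' ?_ hexp
    filter_upwards [eventually_ge_atTop 0] with s hs
    exact abs_mul_exp_neg_integral_sub_le hm hmlb hxb hs
  have hint : IntegrableOn (fun s => g (t - s) * w s) (Ioi 0) := by
    have hw : Continuous w := continuous_iff_continuousAt.mpr fun s =>
      (hasDerivAt_exp_neg_integral_sub hm s).continuousAt
    refine Integrable.mono' ((exp_neg_integrableOn_Ioi 0 hμ₀).const_mul Cg)
      ((hg.comp (continuous_sub_left t)).mul hw).aestronglyMeasurable.restrict ?_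
    filter_upwards [ae_restrict_mem measurableSet_Ioi] with s hs
    rw [Real.norm_eq_abs, neg_mul]
    exact abs_mul_exp_neg_integral_sub_le hm hmlb hgb (le_of_lt hs)
  have hFTC := integral_Ioi_of_hasDerivAt_of_tendsto' (fun s _ => hderiv s) hint.neg hdecay
  rw [integral_neg, zero_sub, neg_inj] at hFTC
  simpa only [w, sub_zero, intervalIntegral.integral_same, neg_zero, Real.exp_zero,
    mul_one] using hFTC.symm

end VariationOfConstants

theorem continuous_integral_Ioi_comp_sub_mul {w k : ℝ → ℝ} {C : ℝ} (hw : Continuous w)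
    (hwb : ∀ t, |w t| ≤ C) (hk : IntegrableOn k (Ioi 0)) :
    Continuous fun t => ∫ φ in Ioi (0 : ℝ), w (t - φ) * k φ := by
  refine continuous_of_dominated
    (fun t => (hw.comp (continuous_sub_left t)).aestronglyMeasurable.mul hk.aestronglyMeasurable)
    (fun t => Eventually.of_forall fun φ => ?_) (hk.norm.const_mul C)
    (Eventually.of_forall fun φ => (hw.comp (continuous_sub_right φ)).mul continuous_const)
  rw [norm_mul, Real.norm_eq_abs]
  exact mul_le_mul_of_nonneg_right (hwb _) (norm_nonneg _)

theorem eq_cyclicG_succ_of_hasDerivAt {f K : ℕ → ℝ → ℝ} {μ y z : ℝ → ℝ} {μ₀ : ℝ} {i : ℕ}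
    (hf : Continuous (f (i + 1))) (hfb : ∃ C, ∀ v, |f (i + 1) v| ≤ C)
    (hK : IntegrableOn (K (i + 1)) (Ioi 0)) (hμ : Continuous μ) (hμ₀ : 0 < μ₀)
    (hμlb : ∀ v, μ₀ ≤ μ v) (hy : Continuous y) (hG : Continuous (cyclicG f K μ i y))
    (hGb : ∃ C, ∀ t, |cyclicG f K μ i y t| ≤ C) (hzb : ∃ C, ∀ t, |z t| ≤ C)
    (hz : ∀ t, HasDerivAt z
      (f (i + 1) (∫ φ in Ioi (0 : ℝ), cyclicG f K μ i y (t - φ) * K (i + 1) φ)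
        - μ (y t) * z t) t) :
    z = cyclicG f K μ (i + 1) y := by
  obtain ⟨Cf, hCf⟩ := hfb
  obtain ⟨CG, hCG⟩ := hGb
  obtain ⟨Cz, hCz⟩ := hzb
  funext t
  exact eq_integral_Ioi_mul_exp_of_hasDerivAt hμ₀ (hμ.comp hy) (fun u => hμlb (y u))
    (hf.comp (continuous_integral_Ioi_comp_sub_mul hG hCG hK)) (fun τ => hCf _) hCz hz

theorem forall_le_of_forall_pos_le_of_eq_zero {α : Type*} {x : ℕ → α} {P : α → Prop} {n : ℕ}
    (hn : 1 ≤ n) (hx0 : x 0 = x n) (h : ∀ i, 1 ≤ i → i ≤ n → P (x i)) :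
    ∀ i, i ≤ n → P (x i)
  | 0, _ => hx0 ▸ h n hn le_rfl
  | i + 1, hi => h (i + 1) (Nat.le_add_left 1 i) hi

theorem stmt4_general
    (n : ℕ) (hn : 2 ≤ n)
    (f K : ℕ → ℝ → ℝ) (μ : ℝ → ℝ) (μ₀ : ℝ)
    (hfcont : ∀ i, 1 ≤ i → i ≤ n → Continuous (f i))
    (hfbdd : ∀ i, 1 ≤ i → i ≤ n → ∃ C, ∀ y, |f i y| ≤ C)
    (hKint : ∀ i, 1 ≤ i → i ≤ n → ∫ φ in Set.Ioi (0 : ℝ), K i φ = 1)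
    (hμcont : Continuous μ) (hμ₀ : 0 < μ₀) (hμlb : ∀ y, μ₀ ≤ μ y)
    (x : ℕ → ℝ → ℝ)
    (hxbdd : ∀ i, 1 ≤ i → i ≤ n → ∃ C, ∀ t, |x i t| ≤ C)
    (hx0 : x 0 = x n)
    (hode : ∀ i, 1 ≤ i → i ≤ n → ∀ t : ℝ,
      HasDerivAt (x i)
        (f i (∫ φ in Set.Ioi (0 : ℝ), x (i - 1) (t - φ) * K i φ)
          - μ (x n t) * x i t) t) :
    ∀ t : ℝ, HasDerivAt (x n)
      (f n (∫ φ in Set.Ioi (0 : ℝ), cyclicG f K μ (n - 1) (x n) (t - φ) * K n φ)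
        - μ (x n t) * x n t) t := by
  have hn1 : 1 ≤ n := by omega
  have hKi : ∀ i, 1 ≤ i → i ≤ n → IntegrableOn (K i) (Ioi 0) := fun i h1 h2 =>
    Integrable.of_integral_ne_zero (by rw [hKint i h1 h2]; exact one_ne_zero)
  have hcont : ∀ i, i ≤ n → Continuous (x i) := forall_le_of_forall_pos_le_of_eq_zero hn1 hx0
    fun i h1 h2 => continuous_iff_continuousAt.mpr fun t => (hode i h1 h2 t).continuousAt
  have hbdd : ∀ i, i ≤ n → ∃ C, ∀ t, |x i t| ≤ C :=
    forall_le_of_forall_pos_le_of_eq_zero (P := fun y => ∃ C, ∀ t, |y t| ≤ C) hn1 hx0 hxbdd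
  have hchain : ∀ i, i ≤ n - 1 → x i = cyclicG f K μ i (x n) := by
    intro i
    induction i with
    | zero => exact fun _ => hx0
    | succ i ih =>
      intro hi
      have hi' : i + 1 ≤ n := by omega
      have hxi := ih (by omega)
      refine eq_cyclicG_succ_of_hasDerivAt (hfcont _ le_add_self hi') (hfbdd _ le_add_self hi')
        (hKi _ le_add_self hi') hμcont hμ₀ hμlb (hcont n le_rfl) (hxi ▸ hcont i (by omega))
        (hxi ▸ hbdd i (by omega)) (hbdd _ hi') fun t => ?_
      simpa only [Nat.add_sub_cancel, hxi] using hode (i + 1) le_add_self hi' t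
  intro t
  simpa only [hchain (n - 1) le_rfl] using hode n hn1 le_rfl t

/-- Theorem 2.2: the last component of a bounded solution of the cyclic
distributed-delay system satisfies a scalar distributed DDE built from the
nested functionals `G_{n-1}`. -/
theorem stmt4
    (n : ℕ) (hn : 2 ≤ n)
    (f K : ℕ → ℝ → ℝ) (μ : ℝ → ℝ) (μ₀ : ℝ)
    (hfcont : ∀ i, 1 ≤ i → i ≤ n → Continuous (f i))
    (hfbdd : ∀ i, 1 ≤ i → i ≤ n → ∃ C, ∀ y, |f i y| ≤ C)
    (hKmeas : ∀ i, 1 ≤ i → i ≤ n → Measurable (K i))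
    (hKnonneg : ∀ i, 1 ≤ i → i ≤ n → ∀ φ : ℝ, 0 ≤ φ → 0 ≤ K i φ)
    (hKint : ∀ i, 1 ≤ i → i ≤ n → ∫ φ in Set.Ioi (0 : ℝ), K i φ = 1)
    (hμcont : Continuous μ) (hμ₀ : 0 < μ₀) (hμlb : ∀ y, μ₀ ≤ μ y)
    (x : ℕ → ℝ → ℝ)
    (hxbdd : ∀ i, 1 ≤ i → i ≤ n → ∃ C, ∀ t, |x i t| ≤ C)
    (hx0 : x 0 = x n)
    (hode : ∀ i, 1 ≤ i → i ≤ n → ∀ t : ℝ,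
      HasDerivAt (x i)
        (f i (∫ φ in Set.Ioi (0 : ℝ), x (i - 1) (t - φ) * K i φ)
          - μ (x n t) * x i t) t) :
    ∀ t : ℝ, HasDerivAt (x n)
      (f n (∫ φ in Set.Ioi (0 : ℝ), cyclicG f K μ (n - 1) (x n) (t - φ) * K n φ)
        - μ (x n t) * x n t) t :=
  stmt4_general n hn f K μ μ₀ hfcont hfbdd hKint hμcont hμ₀ hμlb x hxbdd hx0 hode
end

section
/- Let μ_max ∈ ℝ and let x : [0,∞) → ℝ be differentiable with x(0) > 0. Suppose that for every t ≥ 0 with the property that x(s) ≥ 0 for all s ∈ [0,t], one has x'(t) ≥ -μ_max · x(t). Then x(t) > 0 for all t ≥ 0; in particular x(t) ≥ x(0) · exp(-μ_max · t). -/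
/-! `t ↦ x t * exp (μmax * t)` is non-decreasing as long as `x` has stayed non-negative. If `τ` were
the first time with `x τ ≤ 0`, this would hold on `[0, τ)` (the derivative bound is only needed in
the interior), and by continuity up to `τ`, giving `x τ ≥ x 0 * exp (-μmax * τ) > 0`. -/

open Real Set

section Gronwall

variable {μ a b : ℝ} {x : ℝ → ℝ}

theorem monotoneOn_mul_exp_of_neg_mul_le_deriv (hcont : ContinuousOn x (Icc a b))
    (hdiff : ∀ t ∈ Ioo a b, DifferentiableAt ℝ x t)
    (hderiv : ∀ t ∈ Ioo a b, -μ * x t ≤ deriv x t) :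
    MonotoneOn (fun t => x t * exp (μ * t)) (Icc a b) := by
  have hasDeriv : ∀ t ∈ Ioo a b,
      HasDerivAt (fun t => x t * exp (μ * t)) ((deriv x t + μ * x t) * exp (μ * t)) t := by
    intro t ht
    refine ((hdiff t ht).hasDerivAt.mul ((hasDerivAt_id t).const_mul μ).exp).congr_deriv ?_
    simp only [id, mul_one]
    ring
  refine monotoneOn_of_deriv_nonneg (convex_Icc a b)
    (hcont.mul (by fun_prop)) ?_ ?_ <;> rw [interior_Icc]
  · exact fun t ht => (hasDeriv t ht).differentiableAt.differentiableWithinAt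
  · intro t ht
    rw [(hasDeriv t ht).deriv]
    have := hderiv t ht
    exact mul_nonneg (by linarith) (exp_pos _).le

theorem mul_exp_le_of_neg_mul_le_deriv (hcont : ContinuousOn x (Icc a b))
    (hdiff : ∀ t ∈ Ioo a b, DifferentiableAt ℝ x t)
    (hderiv : ∀ t ∈ Ioo a b, -μ * x t ≤ deriv x t) {t : ℝ} (ht : t ∈ Icc a b) :
    x a * exp (-μ * (t - a)) ≤ x t := by
  have hmono := monotoneOn_mul_exp_of_neg_mul_le_deriv hcont hdiff hderiv
    (left_mem_Icc.2 (ht.1.trans ht.2)) ht ht.1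
  calc x a * exp (-μ * (t - a))
      = x a * exp (μ * a) * exp (-(μ * t)) := by rw [mul_assoc, ← exp_add]; ring_nf
    _ ≤ x t * exp (μ * t) * exp (-(μ * t)) := by gcongr
    _ = x t := by rw [mul_assoc, ← exp_add, add_neg_cancel, exp_zero, mul_one]

end Gronwall

theorem exists_first_nonpos {a b : ℝ} {x : ℝ → ℝ} (hcont : ContinuousOn x (Icc a b))
    (hab : a ≤ b) (hb : x b ≤ 0) :
    ∃ τ ∈ Icc a b, x τ ≤ 0 ∧ ∀ s ∈ Ico a τ, 0 < x s := by
  set Z := Icc a b ∩ x ⁻¹' Iic 0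
  have hZ : IsClosed Z := hcont.preimage_isClosed_of_isClosed isClosed_Icc isClosed_Iic
  have hτ : sInf Z ∈ Z := hZ.csInf_mem ⟨b, right_mem_Icc.2 hab, hb⟩ ⟨a, fun t ht => ht.1.1⟩
  refine ⟨sInf Z, hτ.1, hτ.2, fun s hs => ?_⟩
  by_contra! hxs
  have hsZ : s ∈ Z := ⟨⟨hs.1, hs.2.le.trans hτ.1.2⟩, hxs⟩
  exact (csInf_le ⟨a, fun t ht => ht.1.1⟩ hsZ).not_gt hs.2

/-- Case I of the non-negativity proposition: a Gronwall-type argument.  If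
`x(0) > 0` and `x'(t) ≥ -μ_max x(t)` whenever `x` has remained non-negative on
`[0,t]`, then `x` stays positive and dominates `x(0)·exp(-μ_max t)`. -/
theorem stmt5
    (μmax : ℝ) (x : ℝ → ℝ)
    (hdiff : ∀ t : ℝ, 0 ≤ t → DifferentiableAt ℝ x t)
    (hx0 : 0 < x 0)
    (hineq : ∀ t : ℝ, 0 ≤ t → (∀ s ∈ Set.Icc (0 : ℝ) t, 0 ≤ x s) →
      -μmax * x t ≤ deriv x t) :
    ∀ t : ℝ, 0 ≤ t → 0 < x t ∧ x 0 * Real.exp (-μmax * t) ≤ x t := by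
  have hcont (t : ℝ) : ContinuousOn x (Icc 0 t) :=
    fun s hs => (hdiff s hs.1).continuousAt.continuousWithinAt
  have hbound (t : ℝ) (ht : 0 ≤ t) (hpos : ∀ s ∈ Ico 0 t, 0 < x s) :
      x 0 * exp (-μmax * t) ≤ x t := by
    simpa only [sub_zero] using mul_exp_le_of_neg_mul_le_deriv (hcont t)
      (fun u hu => hdiff u hu.1.le)
      (fun u hu => hineq u hu.1.le fun s hs => (hpos s ⟨hs.1, hs.2.trans_lt hu.2⟩).le)
      (right_mem_Icc.2 ht)
  have hpos (t : ℝ) (ht : 0 ≤ t) : 0 < x t := by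
    by_contra! hxt
    obtain ⟨τ, hτ, hxτ, hbefore⟩ := exists_first_nonpos (hcont t) ht hxt
    exact (mul_pos hx0 (exp_pos _)).not_ge ((hbound τ hτ.1 hbefore).trans hxτ)
  exact fun t ht => ⟨hpos t ht, hbound t ht fun s hs => hpos s hs.1⟩
end

section
/- Let n ≥ 2, let f_1, ..., f_n : ℝ → ℝ be continuous and bounded with f_i(0) = 0 and f_i(x) > 0 for all x > 0 (for each i), let K_1, ..., K_n be probability density functions on [0,∞), and let μ : ℝ → ℝ be continuous with μ₀ ≤ μ(y) ≤ μ_max for all y, for some constants μ₀ > 0 and μ_max. For a bounded continuous function y : ℝ → ℝ define recursively G_0[y] = y and, for i = 1, ..., n-1, G_i[y](t) = ∫_0^∞ f_i( ∫_0^∞ G_{i-1}[y](t - s - φ) K_i(φ) dφ ) · exp(-∫_{t-s}^t μ(y(u)) du) ds. Suppose x : ℝ → ℝ is bounded, continuous, differentiable on (0,∞), satisfies x(s) = ξ(s) for all s ≤ 0 where ξ is non-negative with ∫_0^∞ ξ(-φ) K_i(φ) dφ > 0 for each i = 1, ..., n, and satisfies for all t > 0 the scalar distributed delay differential equation x'(t)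 = f_n( ∫_0^∞ G_{n-1}[x](t - φ) K_n(φ) dφ ) - μ(x(t)) x(t). Then x(t) ≥ 0 for all t ≥ 0. -/
open MeasureTheory

/-!
Suppose `x ≥ 0` up to some time `T ≥ 0`. Since the `f_i` map `[0, ∞)` into itself, every `G_i[x]`
and every kernel average of it is non-negative up to `T`. The forcing term
`f_n(∫ G_{n-1}[x](t - φ) K_n(φ) dφ)` even stays non-negative for `t` slightly beyond `T`: either
some kernel `K_j` vanishes on an interval `(0, c)`, which delays the influence of `x` on the
forcing term by `c`, or every kernel charges every interval `(0, c)`, and then the positivity of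
the weighted average of the history at time `0` climbs up the chain and makes the forcing term
positive at `T`, hence near `T`. With non-negative forcing, `x(t) exp(∫_T^t μ(x))` is
non-decreasing, so `x` stays non-negative a little beyond `T`; a continuity argument concludes.
-/

open Set Filter Topology Function

noncomputable def delayAvg (k G : ℝ → ℝ) (u : ℝ) : ℝ :=
  ∫ φ in Ioi 0, G (u - φ) * k φ

noncomputable def dampedIntegral (g F : ℝ → ℝ) (t : ℝ) : ℝ :=
  ∫ s in Ioi 0, F (t - s) * Real.exp (-∫ u in (t - s)..t, g u)

theorem cyclicG_succ (f K : ℕ → ℝ → ℝ) (μ : ℝ → ℝ) (i : ℕ) (y : ℝ → ℝ) :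
    cyclicG f K μ (i + 1) y = dampedIntegral (fun u => μ (y u))
      (fun r => f (i + 1) (delayAvg (K (i + 1)) (cyclicG f K μ i y) r)) :=
  rfl

section DelayAvg

variable {k G : ℝ → ℝ} {C : ℝ}

theorem integrableOn_delayAvg_integrand (hG : Continuous G) (hGC : ∀ t, |G t| ≤ C)
    (hk : IntegrableOn k (Ioi 0)) (u : ℝ) :
    IntegrableOn (fun φ => G (u - φ) * k φ) (Ioi 0) :=
  hk.bdd_mul (hG.comp (continuous_sub_left u)).aestronglyMeasurable (.of_forall fun _ => hGC _)

theorem continuous_delayAvg (hG : Continuous G) (hGC : ∀ t, |G t| ≤ C)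
    (hk : IntegrableOn k (Ioi 0)) : Continuous (delayAvg k G) :=
  continuous_of_dominated (bound := fun φ => C * ‖k φ‖)
    (fun u => (integrableOn_delayAvg_integrand hG hGC hk u).aestronglyMeasurable)
    (fun _ => .of_forall fun _ => by
      rw [norm_mul]; exact mul_le_mul_of_nonneg_right (hGC _) (norm_nonneg _))
    (hk.norm.const_mul C)
    (.of_forall fun _ => (hG.comp (continuous_sub_right _)).mul continuous_const)

theorem delayAvg_nonneg (hknn : ∀ φ, 0 ≤ φ → 0 ≤ k φ) {u : ℝ} (hG : ∀ r < u, 0 ≤ G r) :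
    0 ≤ delayAvg k G u :=
  setIntegral_nonneg measurableSet_Ioi fun φ (hφ : 0 < φ) =>
    mul_nonneg (hG _ (by linarith)) (hknn φ hφ.le)

theorem delayAvg_nonneg_of_null (hknn : ∀ φ, 0 ≤ φ → 0 ≤ k φ) {c u : ℝ}
    (hnull : volume (support k ∩ Ioo 0 c) = 0) (hG : ∀ r ≤ u - c, 0 ≤ G r) :
    0 ≤ delayAvg k G u := by
  have hkc : ∀ᵐ φ, φ ∈ Ioo 0 c → k φ = 0 := by
    rw [ae_iff]
    exact measure_mono_null (fun φ hφ => by simp_all) hnull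
  refine integral_nonneg_of_ae ?_
  filter_upwards [ae_restrict_mem measurableSet_Ioi, ae_restrict_of_ae hkc]
    with φ (hφ : 0 < φ) hφc
  rcases lt_or_ge φ c with h | h
  · simp [hφc ⟨hφ, h⟩]
  · exact mul_nonneg (hG _ (by linarith)) (hknn φ hφ.le)

theorem delayAvg_pos (hG : Continuous G) (hGC : ∀ t, |G t| ≤ C) (hk : IntegrableOn k (Ioi 0))
    (hknn : ∀ φ, 0 ≤ φ → 0 ≤ k φ) {a u : ℝ} (hG0 : ∀ r < u, 0 ≤ G r)
    (hGpos : ∀ r ∈ Ioo a u, 0 < G r) (hmass : 0 < volume (support k ∩ Ioo 0 (u - a))) :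
    0 < delayAvg k G u := by
  have hnn : 0 ≤ᵐ[volume.restrict (Ioi 0)] fun φ => G (u - φ) * k φ := by
    filter_upwards [ae_restrict_mem measurableSet_Ioi] with φ (hφ : 0 < φ)
    exact mul_nonneg (hG0 _ (by linarith)) (hknn φ hφ.le)
  rw [delayAvg, setIntegral_pos_iff_support_of_nonneg_ae hnn
    (integrableOn_delayAvg_integrand hG hGC hk u)]
  refine hmass.trans_le (measure_mono fun φ ⟨hkφ, hφ0, hφu⟩ => ⟨?_, hφ0⟩)
  exact mul_ne_zero (hGpos _ ⟨by linarith, by linarith⟩).ne' hkφ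

end DelayAvg

section DampedIntegral

variable {g F : ℝ → ℝ} {μ₀ C : ℝ}

theorem continuous_intervalIntegral_sub_self (hg : Continuous g) :
    Continuous fun p : ℝ × ℝ => ∫ u in (p.1 - p.2)..p.1, g u := by
  refine (intervalIntegral.continuous_parametric_intervalIntegral_of_continuous (μ := volume)
    (f := fun (p : ℝ × ℝ) v => g (p.1 - v)) (a₀ := 0) (by fun_prop) continuous_snd).congr
    fun p => ?_
  simp [intervalIntegral.integral_comp_sub_left]

theorem exp_neg_integral_le (hg : Continuous g) (hglb : ∀ u, μ₀ ≤ g u) {s : ℝ} (hs : 0 ≤ s)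
    (t : ℝ) : Real.exp (-∫ u in (t - s)..t, g u) ≤ Real.exp (-μ₀ * s) := by
  rw [Real.exp_le_exp, neg_mul, neg_le_neg_iff]
  calc μ₀ * s = ∫ _ in (t - s)..t, μ₀ := by simp [mul_comm]
    _ ≤ ∫ u in (t - s)..t, g u :=
      intervalIntegral.integral_mono_on (by linarith) intervalIntegrable_const
        (hg.intervalIntegrable _ _) fun u _ => hglb u

theorem norm_damped_integrand_le (hg : Continuous g) (hglb : ∀ u, μ₀ ≤ g u)
    (hFC : ∀ r, |F r| ≤ C) {s : ℝ} (hs : 0 ≤ s) (t : ℝ) :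
    ‖F (t - s) * Real.exp (-∫ u in (t - s)..t, g u)‖ ≤ C * Real.exp (-μ₀ * s) := by
  rw [norm_mul, Real.norm_eq_abs, Real.norm_of_nonneg (Real.exp_pos _).le]
  exact mul_le_mul (hFC _) (exp_neg_integral_le hg hglb hs t) (Real.exp_pos _).le
    ((abs_nonneg _).trans (hFC 0))

theorem continuous_damped_integrand (hg : Continuous g) (hF : Continuous F) :
    Continuous fun p : ℝ × ℝ => F (p.1 - p.2) * Real.exp (-∫ u in (p.1 - p.2)..p.1, g u) :=
  (hF.comp (by fun_prop)).mul (continuous_intervalIntegral_sub_self hg).neg.rexp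

theorem integrableOn_damped_integrand (hg : Continuous g) (hglb : ∀ u, μ₀ ≤ g u) (hμ₀ : 0 < μ₀)
    (hF : Continuous F) (hFC : ∀ r, |F r| ≤ C) (t : ℝ) :
    IntegrableOn (fun s => F (t - s) * Real.exp (-∫ u in (t - s)..t, g u)) (Ioi 0) :=
  Integrable.mono' ((exp_neg_integrableOn_Ioi 0 hμ₀).const_mul C)
    ((continuous_damped_integrand hg hF).comp
      (continuous_const.prodMk continuous_id)).aestronglyMeasurable
    (by
      filter_upwards [ae_restrict_mem measurableSet_Ioi] with s hs
      exact norm_damped_integrand_le hg hglb hFC (le_of_lt hs) t)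

theorem continuous_dampedIntegral (hg : Continuous g) (hglb : ∀ u, μ₀ ≤ g u) (hμ₀ : 0 < μ₀)
    (hF : Continuous F) (hFC : ∀ r, |F r| ≤ C) : Continuous (dampedIntegral g F) :=
  continuous_of_dominated (bound := fun s => C * Real.exp (-μ₀ * s))
    (fun t => (integrableOn_damped_integrand hg hglb hμ₀ hF hFC t).aestronglyMeasurable)
    (fun t => by
      filter_upwards [ae_restrict_mem measurableSet_Ioi] with s hs
      exact norm_damped_integrand_le hg hglb hFC (le_of_lt hs) t)
    ((exp_neg_integrableOn_Ioi 0 hμ₀).const_mul C)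
    (.of_forall fun s => (continuous_damped_integrand hg hF).comp
      (continuous_id.prodMk continuous_const))

theorem bdd_dampedIntegral (hg : Continuous g) (hglb : ∀ u, μ₀ ≤ g u) (hμ₀ : 0 < μ₀)
    (hFC : ∀ r, |F r| ≤ C) : ∃ D, ∀ t, |dampedIntegral g F t| ≤ D :=
  ⟨∫ s in Ioi 0, C * Real.exp (-μ₀ * s), fun t =>
    norm_integral_le_of_norm_le ((exp_neg_integrableOn_Ioi 0 hμ₀).const_mul C) (by
      filter_upwards [ae_restrict_mem measurableSet_Ioi] with s hs
      exact norm_damped_integrand_le hg hglb hFC (le_of_lt hs) t)⟩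

theorem dampedIntegral_nonneg {t : ℝ} (hF : ∀ r < t, 0 ≤ F r) : 0 ≤ dampedIntegral g F t :=
  setIntegral_nonneg measurableSet_Ioi fun s (hs : 0 < s) =>
    mul_nonneg (hF _ (by linarith)) (Real.exp_pos _).le

theorem dampedIntegral_pos (hg : Continuous g) (hglb : ∀ u, μ₀ ≤ g u) (hμ₀ : 0 < μ₀)
    (hF : Continuous F) (hFC : ∀ r, |F r| ≤ C) {a b t : ℝ} (hF0 : ∀ r < t, 0 ≤ F r)
    (hpos : ∀ r ∈ Ioo a b, 0 < F r) (hat : a < t) (hab : a < b) :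
    0 < dampedIntegral g F t := by
  have hnn : 0 ≤ᵐ[volume.restrict (Ioi 0)]
      fun s => F (t - s) * Real.exp (-∫ u in (t - s)..t, g u) := by
    filter_upwards [ae_restrict_mem measurableSet_Ioi] with s (hs : 0 < s)
    exact mul_nonneg (hF0 _ (by linarith)) (Real.exp_pos _).le
  rw [dampedIntegral, setIntegral_pos_iff_support_of_nonneg_ae hnn
    (integrableOn_damped_integrand hg hglb hμ₀ hF hFC t)]
  -- the integrand is positive for `t - s ∈ (a, min t b)`
  refine lt_of_lt_of_le ?_ (measure_mono (s := Ioo (max 0 (t - b)) (t - a))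
    fun s ⟨hs1, hs2⟩ => ⟨?_, (le_max_left _ _).trans_lt hs1⟩)
  · rw [Real.volume_Ioo, ENNReal.ofReal_pos, sub_pos]
    exact max_lt (by linarith) (by linarith)
  · have := (le_max_right 0 (t - b)).trans_lt hs1
    exact mul_ne_zero (hpos _ ⟨by linarith, by linarith⟩).ne' (Real.exp_pos _).ne'

end DampedIntegral

structure ChainAssumptions (n : ℕ) (f K : ℕ → ℝ → ℝ) (μ : ℝ → ℝ) (μ₀ : ℝ) : Prop where
  continuous_f : ∀ j, 1 ≤ j → j ≤ n → Continuous (f j)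
  bdd_f : ∀ j, 1 ≤ j → j ≤ n → ∃ C, ∀ z, |f j z| ≤ C
  f_zero : ∀ j, 1 ≤ j → j ≤ n → f j 0 = 0
  f_pos : ∀ j, 1 ≤ j → j ≤ n → ∀ z, 0 < z → 0 < f j z
  K_nonneg : ∀ j, 1 ≤ j → j ≤ n → ∀ φ, 0 ≤ φ → 0 ≤ K j φ
  integrableOn_K : ∀ j, 1 ≤ j → j ≤ n → IntegrableOn (K j) (Ioi 0)
  continuous_μ : Continuous μ
  μ₀_pos : 0 < μ₀
  μ₀_le : ∀ z, μ₀ ≤ μ z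

namespace ChainAssumptions

variable {n : ℕ} {f K : ℕ → ℝ → ℝ} {μ : ℝ → ℝ} {μ₀ : ℝ} {y : ℝ → ℝ}

theorem f_nonneg (hA : ChainAssumptions n f K μ μ₀) {j : ℕ} (h1 : 1 ≤ j) (h2 : j ≤ n) {z : ℝ}
    (hz : 0 ≤ z) : 0 ≤ f j z := by
  rcases hz.eq_or_lt with rfl | hz
  · rw [hA.f_zero j h1 h2]
  · exact (hA.f_pos j h1 h2 z hz).le

theorem continuous_bdd_cyclicG (hA : ChainAssumptions n f K μ μ₀) (hy : Continuous y)
    (hyC : ∃ C, ∀ t, |y t| ≤ C) :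
    ∀ i ≤ n, Continuous (cyclicG f K μ i y) ∧ ∃ C, ∀ t, |cyclicG f K μ i y t| ≤ C
  | 0, _ => ⟨hy, hyC⟩
  | i + 1, hi => by
    obtain ⟨hG, C, hGC⟩ := hA.continuous_bdd_cyclicG hy hyC i (by omega)
    obtain ⟨Cf, hfC⟩ := hA.bdd_f (i + 1) (by omega) hi
    have hg := hA.continuous_μ.comp hy
    rw [cyclicG_succ]
    exact ⟨continuous_dampedIntegral hg (fun _ => hA.μ₀_le _) hA.μ₀_pos
      ((hA.continuous_f _ (by omega) hi).comp
        (continuous_delayAvg hG hGC (hA.integrableOn_K _ (by omega) hi))) (fun _ => hfC _),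
      bdd_dampedIntegral hg (fun _ => hA.μ₀_le _) hA.μ₀_pos (fun _ => hfC _)⟩

theorem continuous_delayAvg_cyclicG (hA : ChainAssumptions n f K μ μ₀) (hy : Continuous y)
    (hyC : ∃ C, ∀ t, |y t| ≤ C) {i : ℕ} (hi : i < n) :
    Continuous (delayAvg (K (i + 1)) (cyclicG f K μ i y)) := by
  obtain ⟨hG, C, hGC⟩ := hA.continuous_bdd_cyclicG hy hyC i hi.le
  exact continuous_delayAvg hG hGC (hA.integrableOn_K _ (by omega) hi)

theorem cyclicG_succ_nonneg (hA : ChainAssumptions n f K μ μ₀) {i : ℕ} (hi : i < n) {T : ℝ}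
    (hAvg : ∀ t ≤ T, 0 ≤ delayAvg (K (i + 1)) (cyclicG f K μ i y) t) :
    ∀ t ≤ T, 0 ≤ cyclicG f K μ (i + 1) y t := fun t ht => by
  rw [cyclicG_succ]
  exact dampedIntegral_nonneg fun r hr => hA.f_nonneg (by omega) hi (hAvg r (by linarith))

theorem cyclicG_nonneg (hA : ChainAssumptions n f K μ μ₀) {T : ℝ} (hy : ∀ t ≤ T, 0 ≤ y t) :
    ∀ i ≤ n, ∀ t ≤ T, 0 ≤ cyclicG f K μ i y t
  | 0, _ => hy
  | i + 1, hi => hA.cyclicG_succ_nonneg hi fun _ ht =>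
      delayAvg_nonneg (hA.K_nonneg _ (by omega) hi) fun r hr =>
        hA.cyclicG_nonneg hy i (by omega) r (by linarith)

theorem delayAvg_cyclicG_nonneg_of_le (hA : ChainAssumptions n f K μ μ₀) {p : ℕ} {T : ℝ}
    (hp : ∀ t ≤ T, 0 ≤ delayAvg (K (p + 1)) (cyclicG f K μ p y) t) :
    ∀ i, p ≤ i → i < n → ∀ t ≤ T, 0 ≤ delayAvg (K (i + 1)) (cyclicG f K μ i y) t := by
  intro i hpi
  induction i, hpi using Nat.le_induction with
  | base => exact fun _ => hp
  | succ i hpi ih =>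
    intro hi t ht
    have hG := hA.cyclicG_succ_nonneg (by omega) (ih (by omega))
    exact delayAvg_nonneg (hA.K_nonneg _ (by omega) hi) fun r hr => hG r (by linarith)

theorem delayAvg_cyclicG_nonneg_of_null (hA : ChainAssumptions n f K μ μ₀) {T c : ℝ}
    (hy : ∀ t ≤ T, 0 ≤ y t) {j : ℕ} (hj1 : 1 ≤ j) (hjn : j ≤ n)
    (hnull : volume (support (K j) ∩ Ioo 0 c) = 0) :
    ∀ i, j ≤ i + 1 → i < n → ∀ t ≤ T + c, 0 ≤ delayAvg (K (i + 1)) (cyclicG f K μ i y) t := by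
  obtain ⟨p, rfl⟩ : ∃ p, j = p + 1 := ⟨j - 1, by omega⟩
  intro i hi hin
  refine hA.delayAvg_cyclicG_nonneg_of_le (p := p) (fun t ht => ?_) i (by omega) hin
  exact delayAvg_nonneg_of_null (hA.K_nonneg _ hj1 hjn) hnull fun r hr =>
    hA.cyclicG_nonneg hy p (by omega) r (by linarith)

theorem delayAvg_cyclicG_succ_pos (hA : ChainAssumptions n f K μ μ₀) (hy : Continuous y)
    (hyC : ∃ C, ∀ t, |y t| ≤ C) {T : ℝ} (hyT : ∀ t ≤ T, 0 ≤ y t) {i : ℕ} (hi : i + 1 < n)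
    (hmass : ∀ c, 0 < c → 0 < volume (support (K (i + 2)) ∩ Ioo 0 c)) {l b : ℝ} (hlb : l < b)
    (hpos : ∀ r ∈ Ioo l b, 0 < delayAvg (K (i + 1)) (cyclicG f K μ i y) r) :
    ∀ v ∈ Ioc l T, 0 < delayAvg (K (i + 2)) (cyclicG f K μ (i + 1) y) v := by
  have hG0 := hA.cyclicG_nonneg hyT
  have hAvg0 : ∀ t ≤ T, 0 ≤ delayAvg (K (i + 1)) (cyclicG f K μ i y) t := fun t ht =>
    delayAvg_nonneg (hA.K_nonneg _ (by omega) (by omega)) fun r hr =>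
      hG0 i (by omega) r (by linarith)
  have hGpos : ∀ r ∈ Ioc l T, 0 < cyclicG f K μ (i + 1) y r := fun r hr => by
    obtain ⟨Cf, hfC⟩ := hA.bdd_f (i + 1) (by omega) (by omega)
    rw [cyclicG_succ]
    exact dampedIntegral_pos (hA.continuous_μ.comp hy) (fun _ => hA.μ₀_le _) hA.μ₀_pos
      ((hA.continuous_f _ (by omega) (by omega)).comp
        (hA.continuous_delayAvg_cyclicG hy hyC (by omega))) (fun _ => hfC _)
      (fun r' hr' => hA.f_nonneg (by omega) (by omega) (hAvg0 r' (by linarith [hr.2])))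
      (fun r' hr' => hA.f_pos _ (by omega) (by omega) _ (hpos r' hr')) hr.1 hlb
  obtain ⟨hG, C, hGC⟩ := hA.continuous_bdd_cyclicG hy hyC (i + 1) (by omega)
  intro v hv
  exact delayAvg_pos hG hGC (hA.integrableOn_K _ (by omega) (by omega))
    (hA.K_nonneg _ (by omega) (by omega))
    (fun r hr => hG0 (i + 1) (by omega) r (by linarith [hv.2]))
    (fun r hr => hGpos r ⟨hr.1, by linarith [hr.2, hv.2]⟩) (hmass _ (by linarith [hv.1]))

theorem delayAvg_cyclicG_pos (hA : ChainAssumptions n f K μ μ₀) (hy : Continuous y)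
    (hyC : ∃ C, ∀ t, |y t| ≤ C) {T : ℝ} (hT : 0 ≤ T) (hyT : ∀ t ≤ T, 0 ≤ y t)
    (hy0 : 0 < delayAvg (K 1) y 0)
    (hmass : ∀ j, 1 ≤ j → j ≤ n → ∀ c, 0 < c → 0 < volume (support (K j) ∩ Ioo 0 c)) :
    ∀ i, 1 ≤ i → i < n → 0 < delayAvg (K (i + 1)) (cyclicG f K μ i y) T := by
  intro i hi1 hin
  obtain ⟨l, u, ⟨hl, hu⟩, hlu⟩ := ((hA.continuous_delayAvg_cyclicG hy hyC (i := 0)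
    (by omega)).tendsto 0 |>.eventually_const_lt hy0).exists_Ioo_subset
  suffices ∀ v ∈ Ioc l T, 0 < delayAvg (K (i + 1)) (cyclicG f K μ i y) v from
    this T ⟨by linarith, le_rfl⟩
  induction i, hi1 using Nat.le_induction with
  | base =>
    exact hA.delayAvg_cyclicG_succ_pos hy hyC hyT (i := 0) hin
      (hmass 2 (by omega) (by omega)) (by linarith) fun r hr => hlu hr
  | succ i hi ih =>
    exact hA.delayAvg_cyclicG_succ_pos hy hyC hyT hin (hmass (i + 2) (by omega) (by omega))
      (by linarith) fun r hr => ih (by omega) r ⟨hr.1, hr.2.le⟩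

theorem eventually_nonneg_forcing (hA : ChainAssumptions n f K μ μ₀) (hn : 2 ≤ n)
    (hy : Continuous y) (hyC : ∃ C, ∀ t, |y t| ≤ C) (hy0 : 0 < delayAvg (K 1) y 0) {T : ℝ}
    (hT : 0 ≤ T) (hyT : ∀ t ≤ T, 0 ≤ y t) :
    ∀ᶠ t in 𝓝 T, 0 ≤ f n (delayAvg (K n) (cyclicG f K μ (n - 1) y) t) := by
  obtain ⟨m, rfl⟩ : ∃ m, n = m + 1 := ⟨n - 1, by omega⟩
  rw [Nat.add_sub_cancel]
  refine Eventually.mono ?_ fun t ht => hA.f_nonneg (by omega) le_rfl ht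
  by_cases hmass : ∀ j, 1 ≤ j → j ≤ m + 1 → ∀ c, 0 < c → 0 < volume (support (K j) ∩ Ioo 0 c)
  · have hpos := hA.delayAvg_cyclicG_pos hy hyC hT hyT hy0 hmass m (by omega) (by omega)
    exact ((hA.continuous_delayAvg_cyclicG hy hyC (i := m) (by omega)).tendsto T
      |>.eventually_const_lt hpos).mono fun _ => le_of_lt
  · push Not at hmass
    obtain ⟨j, hj1, hjn, c, hc, hnull⟩ := hmass
    exact (eventually_lt_nhds (lt_add_of_pos_right T hc)).mono fun t ht =>
      hA.delayAvg_cyclicG_nonneg_of_null hyT hj1 hjn (nonpos_iff_eq_zero.1 hnull) m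
        (by omega) (by omega) t ht.le

end ChainAssumptions

theorem nonneg_of_hasDerivAt_of_forcing_nonneg {x F a : ℝ → ℝ} {T b : ℝ} (hTb : T ≤ b)
    (ha : Continuous a) (hx : ContinuousOn x (Icc T b))
    (hderiv : ∀ t ∈ Ioo T b, HasDerivAt x (F t - a t * x t) t)
    (hF : ∀ t ∈ Ioo T b, 0 ≤ F t) (hxT : 0 ≤ x T) : ∀ t ∈ Icc T b, 0 ≤ x t := by
  -- the integrating factor `E` turns `x' ≥ -a x` into monotonicity of `x E`
  set E : ℝ → ℝ := fun t => Real.exp (∫ u in T..t, a u)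
  have hE : ∀ t, HasDerivAt E (E t * a t) t := fun t =>
    (ha.integral_hasStrictDerivAt T t).hasDerivAt.exp
  have hmono : MonotoneOn (fun t => x t * E t) (Icc T b) := by
    refine monotoneOn_of_hasDerivWithinAt_nonneg (convex_Icc T b)
      (f' := fun t => (F t - a t * x t) * E t + x t * (E t * a t))
      (hx.mul (continuous_iff_continuousAt.2 fun t => (hE t).continuousAt).continuousOn)
      (fun t ht => ?_) (fun t ht => ?_)
    · rw [interior_Icc] at ht
      exact ((hderiv t ht).mul (hE t)).hasDerivWithinAt
    · rw [interior_Icc] at ht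
      calc (0 : ℝ) ≤ F t * E t := mul_nonneg (hF t ht) (Real.exp_pos _).le
        _ = (F t - a t * x t) * E t + x t * (E t * a t) := by ring
  intro t ht
  have h := hmono (left_mem_Icc.2 hTb) ht ht.1
  simp only [E, intervalIntegral.integral_same, Real.exp_zero, mul_one] at h
  exact nonneg_of_mul_nonneg_left (hxT.trans h) (Real.exp_pos _)

theorem forall_nonneg_of_nonneg_Iic_extend {x : ℝ → ℝ} (hx : Continuous x) {t₀ : ℝ}
    (h₀ : ∀ t ≤ t₀, 0 ≤ x t)
    (hext : ∀ T, t₀ ≤ T → (∀ t ≤ T, 0 ≤ x t) → ∃ b > T, ∀ t ∈ Icc T b, 0 ≤ x t) :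
    ∀ t, 0 ≤ x t := by
  by_contra! hneg
  set S := {t | x t < 0}
  have hSbdd : BddBelow S := ⟨t₀, fun t (ht : x t < 0) => le_of_not_ge fun h => (h₀ t h).not_gt ht⟩
  have hbelow : Iio (sInf S) ⊆ x ⁻¹' Ici 0 := fun t ht => show 0 ≤ x t from
    le_of_not_gt fun h => (csInf_le hSbdd h).not_gt ht
  have hT : ∀ t ≤ sInf S, 0 ≤ x t := fun t ht =>
    (isClosed_Ici.preimage hx).closure_subset_iff.2 hbelow (by rwa [closure_Iio])
  obtain ⟨b, hb, hxb⟩ := hext (sInf S) (le_csInf hneg fun t ht => by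
    by_contra! h; exact (h₀ t h.le).not_gt ht) hT
  have : b ≤ sInf S := le_csInf hneg fun t (ht : x t < 0) => by
    by_contra! h; exact (hxb t ⟨csInf_le hSbdd ht, h.le⟩).not_gt ht
  linarith

theorem stmt6_general
    (n : ℕ) (hn : 2 ≤ n)
    (f K : ℕ → ℝ → ℝ) (μ : ℝ → ℝ) (μ₀ : ℝ)
    (hfcont : ∀ i, 1 ≤ i → i ≤ n → Continuous (f i))
    (hfbdd : ∀ i, 1 ≤ i → i ≤ n → ∃ C, ∀ y, |f i y| ≤ C)
    (hf0 : ∀ i, 1 ≤ i → i ≤ n → f i 0 = 0)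
    (hfpos : ∀ i, 1 ≤ i → i ≤ n → ∀ y : ℝ, 0 < y → 0 < f i y)
    (hKnonneg : ∀ i, 1 ≤ i → i ≤ n → ∀ φ : ℝ, 0 ≤ φ → 0 ≤ K i φ)
    (hKint : ∀ i, 1 ≤ i → i ≤ n → ∫ φ in Set.Ioi (0 : ℝ), K i φ = 1)
    (hμcont : Continuous μ) (hμ₀ : 0 < μ₀)
    (hμlb : ∀ y, μ₀ ≤ μ y)
    (x ξ : ℝ → ℝ)
    (hxbdd : ∃ C, ∀ t, |x t| ≤ C) (hxcont : Continuous x)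
    (hhist : ∀ s : ℝ, s ≤ 0 → x s = ξ s)
    (hξnonneg : ∀ s : ℝ, s ≤ 0 → 0 ≤ ξ s)
    (hξpos : ∀ i, 1 ≤ i → i ≤ n →
      0 < ∫ φ in Set.Ioi (0 : ℝ), ξ (-φ) * K i φ)
    (hode : ∀ t : ℝ, 0 < t → HasDerivAt x
      (f n (∫ φ in Set.Ioi (0 : ℝ), cyclicG f K μ (n - 1) x (t - φ) * K n φ)
        - μ (x t) * x t) t) :
    ∀ t : ℝ, 0 ≤ t → 0 ≤ x t := by
  have hA : ChainAssumptions n f K μ μ₀ := ⟨hfcont, hfbdd, hf0, hfpos, hKnonneg,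
    fun j h1 h2 => .of_integral_ne_zero (by rw [hKint j h1 h2]; exact one_ne_zero),
    hμcont, hμ₀, hμlb⟩
  have hx0 : ∀ t ≤ 0, 0 ≤ x t := fun t ht => hhist t ht ▸ hξnonneg t ht
  have hxK : 0 < delayAvg (K 1) x 0 := (hξpos 1 le_rfl (by omega)).trans_eq <|
    setIntegral_congr_fun measurableSet_Ioi fun φ (hφ : 0 < φ) => by
      rw [zero_sub, hhist _ (by linarith)]
  refine fun t _ => forall_nonneg_of_nonneg_Iic_extend hxcont hx0 (fun T hT hxT => ?_) t
  obtain ⟨b, hTb, hb⟩ := exists_Ico_subset_of_mem_nhds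
    (hA.eventually_nonneg_forcing hn hxcont hxbdd hxK hT hxT) ⟨T + 1, by linarith⟩
  exact ⟨b, hTb, nonneg_of_hasDerivAt_of_forcing_nonneg hTb.le (hμcont.comp hxcont)
    hxcont.continuousOn (fun t ht => hode t (by linarith [ht.1]))
    (fun t ht => hb ⟨ht.1.le, ht.2⟩) (hxT T le_rfl)⟩

/-- Proposition 3.1: solutions of the reduced scalar distributed DDE evolving
from non-negative initial history with positive weighted averages remain
non-negative. -/
theorem stmt6
    (n : ℕ) (hn : 2 ≤ n)
    (f K : ℕ → ℝ → ℝ) (μ : ℝ → ℝ) (μ₀ μmax : ℝ)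
    (hfcont : ∀ i, 1 ≤ i → i ≤ n → Continuous (f i))
    (hfbdd : ∀ i, 1 ≤ i → i ≤ n → ∃ C, ∀ y, |f i y| ≤ C)
    (hf0 : ∀ i, 1 ≤ i → i ≤ n → f i 0 = 0)
    (hfpos : ∀ i, 1 ≤ i → i ≤ n → ∀ y : ℝ, 0 < y → 0 < f i y)
    (hKmeas : ∀ i, 1 ≤ i → i ≤ n → Measurable (K i))
    (hKnonneg : ∀ i, 1 ≤ i → i ≤ n → ∀ φ : ℝ, 0 ≤ φ → 0 ≤ K i φ)
    (hKint : ∀ i, 1 ≤ i → i ≤ n → ∫ φ in Set.Ioi (0 : ℝ), K i φ = 1)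
    (hμcont : Continuous μ) (hμ₀ : 0 < μ₀)
    (hμlb : ∀ y, μ₀ ≤ μ y) (hμub : ∀ y, μ y ≤ μmax)
    (x ξ : ℝ → ℝ)
    (hxbdd : ∃ C, ∀ t, |x t| ≤ C) (hxcont : Continuous x)
    (hhist : ∀ s : ℝ, s ≤ 0 → x s = ξ s)
    (hξnonneg : ∀ s : ℝ, s ≤ 0 → 0 ≤ ξ s)
    (hξpos : ∀ i, 1 ≤ i → i ≤ n →
      0 < ∫ φ in Set.Ioi (0 : ℝ), ξ (-φ) * K i φ)
    (hode : ∀ t : ℝ, 0 < t → HasDerivAt x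
      (f n (∫ φ in Set.Ioi (0 : ℝ), cyclicG f K μ (n - 1) x (t - φ) * K n φ)
        - μ (x t) * x t) t) :
    ∀ t : ℝ, 0 ≤ t → 0 ≤ x t :=
  stmt6_general n hn f K μ μ₀ hfcont hfbdd hf0 hfpos hKnonneg hKint hμcont hμ₀ hμlb x ξ hxbdd hxcont
    hhist hξnonneg hξpos hode
end

section
/- Let μ* > 0, let A, B, C ∈ ℝ, let t ∈ ℝ, let K be a probability density function on [0,∞), and let λ ∈ ℂ with λ ≠ 0, Re(λ) > -μ*, and ∫_0^∞ e^{-Re(λ) φ} K(φ) dφ < ∞. Then ∫_0^∞ ( A · ∫_0^∞ e^{λ(t - s - φ)} K(φ) dφ ) e^{-μ* s} ds + ∫_0^∞ e^{-μ* s} · B · ( ∫_{t-s}^t C e^{λ x} dx ) ds = ( A · K̂(λ) / (μ* + λ) + B C / (μ* (μ* + λ)) ) · e^{λ t}, where K̂(λ) = ∫_0^∞ e^{-λ φ} K(φ) dφ. -/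
/-!
Splitting `e^{λ(t-s-φ)} = e^{λ(t-s)} e^{-λφ}` pulls the Laplace transform `K̂(λ)` out of the
delay term, and evaluating the inner `x`-integral turns the clearance term into
`(e^{λt}/λ)(e^{-μ*s} - e^{-(μ*+λ)s})`. Everything left is `∫₀^∞ e^{-as} ds = 1/a` with `Re a > 0`,
and `(1/μ* - 1/(μ*+λ))/λ = 1/(μ*(μ*+λ))`.
-/

open MeasureTheory Set

namespace Complex

lemma integral_exp_neg_mul_Ioi_zero {a : ℂ} (ha : 0 < a.re) :
    ∫ s : ℝ in Ioi 0, exp (-a * s) = a⁻¹ := by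
  simpa using integral_exp_mul_complex_Ioi (a := -a) (by simpa using ha) 0

lemma integrableOn_exp_neg_mul_Ioi_zero {a : ℂ} (ha : 0 < a.re) :
    IntegrableOn (fun s : ℝ => exp (-a * s)) (Ioi 0) :=
  integrableOn_exp_mul_complex_Ioi (by simpa using ha) 0

lemma integral_exp_mul_sub_mul {α : Type*} [MeasurableSpace α] (μ : Measure α)
    (g : α → ℂ) (l u : ℂ) (f : α → ℂ) :
    ∫ φ, exp (l * (u - g φ)) * f φ ∂μ = exp (l * u) * ∫ φ, exp (-l * g φ) * f φ ∂μ := by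
  rw [← integral_const_mul]
  congr 1 with φ
  rw [← mul_assoc, ← exp_add]
  ring_nf

lemma exp_mul_sub_mul_exp_neg_mul (l m : ℂ) (t s : ℝ) :
    exp (l * (t - s)) * exp (-m * s) = exp (l * t) * exp (-(m + l) * s) := by
  rw [← exp_add, ← exp_add]
  ring_nf

lemma integral_exp_mul_sub_mul_exp_neg_mul_Ioi {l m : ℂ} (h : 0 < (m + l).re) (t : ℝ) :
    ∫ s : ℝ in Ioi 0, exp (l * (t - s)) * exp (-m * s) = exp (l * t) / (m + l) := by
  simp_rw [exp_mul_sub_mul_exp_neg_mul, integral_const_mul, integral_exp_neg_mul_Ioi_zero h,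
    div_eq_mul_inv]

lemma integral_exp_neg_mul_mul_intervalIntegral_exp {l m : ℂ} (hl : l ≠ 0) (hm : 0 < m.re)
    (hml : 0 < (m + l).re) (t : ℝ) :
    ∫ s : ℝ in Ioi 0, exp (-m * s) * ∫ x in (t - s)..t, exp (l * x)
      = exp (l * t) / (m * (m + l)) := by
  have integrand (s : ℝ) : exp (-m * s) * ∫ x in (t - s)..t, exp (l * x)
      = l⁻¹ * (exp (l * t) * exp (-m * s) - exp (l * t) * exp (-(m + l) * s)) := by
    rw [integral_exp_mul_complex hl, ← exp_mul_sub_mul_exp_neg_mul]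
    push_cast
    ring
  simp_rw [integrand]
  rw [integral_const_mul, integral_sub ((integrableOn_exp_neg_mul_Ioi_zero hm).const_mul _)
      ((integrableOn_exp_neg_mul_Ioi_zero hml).const_mul _), integral_const_mul,
    integral_const_mul, integral_exp_neg_mul_Ioi_zero hm, integral_exp_neg_mul_Ioi_zero hml]
  have hm0 : m ≠ 0 := fun h => by simp [h] at hm
  have hml0 : m + l ≠ 0 := fun h => by simp [h] at hml
  field_simp
  ring

end Complex

theorem stmt9_general
    (μstar : ℝ) (hμ : 0 < μstar) (A B C : ℝ) (t : ℝ)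
    (K : ℝ → ℝ)
    (l : ℂ) (hl : l ≠ 0) (hre : -μstar < l.re) :
    (∫ s in Set.Ioi (0 : ℝ),
        ((A : ℂ) * ∫ φ in Set.Ioi (0 : ℝ),
            Complex.exp (l * ((t : ℂ) - s - φ)) * (K φ : ℂ))
          * Complex.exp (-(μstar : ℂ) * s))
      + (∫ s in Set.Ioi (0 : ℝ),
          Complex.exp (-(μstar : ℂ) * s) * (B : ℂ) *
            ∫ x in (t - s)..t, (C : ℂ) * Complex.exp (l * x))
      = ((A : ℂ) * (∫ φ in Set.Ioi (0 : ℝ), Complex.exp (-l * φ) * (K φ : ℂ))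
            / ((μstar : ℂ) + l)
          + (B : ℂ) * (C : ℂ) / ((μstar : ℂ) * ((μstar : ℂ) + l)))
        * Complex.exp (l * t) := by
  have hμ' : 0 < (μstar : ℂ).re := by simpa using hμ
  have hμl : 0 < ((μstar : ℂ) + l).re := by
    rw [Complex.add_re, Complex.ofReal_re]
    linarith
  set Khat := ∫ φ in Set.Ioi (0 : ℝ), Complex.exp (-l * φ) * (K φ : ℂ)
  have recruitment : ∫ s in Set.Ioi (0 : ℝ),
      ((A : ℂ) * ∫ φ in Set.Ioi (0 : ℝ), Complex.exp (l * ((t : ℂ) - s - φ)) * (K φ : ℂ))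
        * Complex.exp (-(μstar : ℂ) * s)
      = A * Khat * (Complex.exp (l * t) / (μstar + l)) := by
    have integrand (s : ℝ) :
        (A : ℂ) * (∫ φ in Set.Ioi (0 : ℝ), Complex.exp (l * ((t : ℂ) - s - φ)) * (K φ : ℂ))
          * Complex.exp (-(μstar : ℂ) * s)
        = A * Khat * (Complex.exp (l * (t - s)) * Complex.exp (-(μstar : ℂ) * s)) := by
      rw [Complex.integral_exp_mul_sub_mul]
      ring
    simp_rw [integrand, integral_const_mul, Complex.integral_exp_mul_sub_mul_exp_neg_mul_Ioi hμl]
  have clearance : ∫ s in Set.Ioi (0 : ℝ),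
      Complex.exp (-(μstar : ℂ) * s) * (B : ℂ) * ∫ x in (t - s)..t, (C : ℂ) * Complex.exp (l * x)
      = B * C * (Complex.exp (l * t) / (μstar * (μstar + l))) := by
    simp_rw [intervalIntegral.integral_const_mul, mul_comm _ (B : ℂ), mul_assoc,
      mul_left_comm _ (C : ℂ), integral_const_mul,
      Complex.integral_exp_neg_mul_mul_intervalIntegral_exp hl hμ' hμl]
  rw [recruitment, clearance]
  ring

/-- The Fréchet derivative `DG₁` applied to the exponential ansatz `e^{λt}`:
the combined delayed-recruitment and state-dependent-clearance terms evaluate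
to `(A·K̂(λ)/(μ*+λ) + BC/(μ*(μ*+λ)))·e^{λt}`, where `K̂` is the Laplace
transform of the delay kernel `K`. -/
theorem stmt9
    (μstar : ℝ) (hμ : 0 < μstar) (A B C : ℝ) (t : ℝ)
    (K : ℝ → ℝ)
    (hKmeas : Measurable K) (hKnonneg : ∀ φ : ℝ, 0 ≤ φ → 0 ≤ K φ)
    (hKint : ∫ φ in Set.Ioi (0 : ℝ), K φ = 1)
    (l : ℂ) (hl : l ≠ 0) (hre : -μstar < l.re)
    (hKlap : IntegrableOn (fun φ : ℝ => Real.exp (-l.re * φ) * K φ) (Set.Ioi 0)) :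
    (∫ s in Set.Ioi (0 : ℝ),
        ((A : ℂ) * ∫ φ in Set.Ioi (0 : ℝ),
            Complex.exp (l * ((t : ℂ) - s - φ)) * (K φ : ℂ))
          * Complex.exp (-(μstar : ℂ) * s))
      + (∫ s in Set.Ioi (0 : ℝ),
          Complex.exp (-(μstar : ℂ) * s) * (B : ℂ) *
            ∫ x in (t - s)..t, (C : ℂ) * Complex.exp (l * x))
      = ((A : ℂ) * (∫ φ in Set.Ioi (0 : ℝ), Complex.exp (-l * φ) * (K φ : ℂ))
            / ((μstar : ℂ) + l)
          + (B : ℂ) * (C : ℂ) / ((μstar : ℂ) * ((μstar : ℂ) + l)))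
        * Complex.exp (l * t) :=
  stmt9_general μstar hμ A B C t K l hl hre
end

section
/- Let F : ℝ → ℝ be continuous and bounded, let α_I, α_E, β_E, K_E, γ_M, γ_I, γ_E > 0, ν_E, ν_M ≥ 0, τ_I, τ_M ≥ 0, and suppose M, I, E : ℝ → ℝ are bounded differentiable functions with K_E + E(t) > 0 for all t, satisfying for all t ∈ ℝ: M'(t) = F(e^{-ν_E τ_M} E(t - τ_M)) - γ_M M(t); I'(t) = α_I M(t - τ_I) e^{-ν_M τ_I} - γ_I I(t); E'(t) = α_E I(t) - β_E I(t) E(t)/(K_E + E(t)) - γ_E E(t). Then for every t ∈ ℝ, E'(t) = ( ∫_0^∞ α_I ( ∫_0^∞ F( e^{-ν_E τ_M} E(t - θ - φ - τ_I - τ_M) ) e^{-γ_M φ} dφ ) e^{-ν_M τ_I} e^{-γ_I θ} dθ ) · ( α_E - β_E E(t)/(K_E + E(t)) ) - γ_E E(t). -/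
/-!
A bounded solution of `u' = g - γ u` with `γ > 0` and bounded forcing `g` is the
fading-memory convolution `u t = ∫₀^∞ g (t - s) e^{-γ s} ds`: the derivative of
`s ↦ -e^{-γ s} u (t - s)` is `g (t - s) e^{-γ s}`, and this function vanishes at infinity
because `u` is bounded. Applied to `M` and then to `I`, this expresses `I t` as the double
integral, which is then substituted into the equation for `E`.
-/

open MeasureTheory Filter Set Topology

section LinearRelaxation

variable {u g : ℝ → ℝ} {γ : ℝ}

lemma measurable_of_forall_hasDerivAt_sub_mul (hu : ∀ s, HasDerivAt u (g s - γ * u s) s) :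
    Measurable g := by
  have hg : g = fun s => deriv u s + γ * u s := funext fun s => by rw [(hu s).deriv]; ring
  rw [hg]
  exact (measurable_deriv u).add
    ((continuous_iff_continuousAt.2 fun s => (hu s).continuousAt).measurable.const_mul γ)

lemma integrableOn_Ioi_comp_sub_mul_exp (hγ : 0 < γ) (hg : Measurable g)
    {C : ℝ} (hC : ∀ s, |g s| ≤ C) (t : ℝ) :
    IntegrableOn (fun s => g (t - s) * Real.exp (-γ * s)) (Ioi 0) := by
  refine Integrable.mono' ((exp_neg_integrableOn_Ioi 0 hγ).const_mul C)
    ((hg.comp (measurable_const.sub measurable_id)).mul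
      (by fun_prop : Measurable fun s : ℝ => Real.exp (-γ * s))).aestronglyMeasurable ?_
  filter_upwards with s
  rw [Real.norm_eq_abs, abs_mul, abs_of_pos (Real.exp_pos _)]
  exact mul_le_mul_of_nonneg_right (hC _) (Real.exp_pos _).le

lemma eq_integral_Ioi_of_forall_hasDerivAt_sub_mul (hγ : 0 < γ)
    (hu : ∀ s, HasDerivAt u (g s - γ * u s) s) (hub : ∃ C, ∀ s, |u s| ≤ C)
    (hgb : ∃ C, ∀ s, |g s| ≤ C) (t : ℝ) :
    u t = ∫ s in Ioi 0, g (t - s) * Real.exp (-γ * s) := by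
  obtain ⟨Cu, hCu⟩ := hub
  obtain ⟨Cg, hCg⟩ := hgb
  have hderiv : ∀ s, HasDerivAt (fun s => -(Real.exp (-γ * s) * u (t - s)))
      (g (t - s) * Real.exp (-γ * s)) s := by
    intro s
    have hexp : HasDerivAt (fun s => Real.exp (-γ * s)) (Real.exp (-γ * s) * -γ) s := by
      simpa using ((hasDerivAt_id s).const_mul (-γ)).exp
    have hshift : HasDerivAt (fun s => u (t - s)) (-(g (t - s) - γ * u (t - s))) s := by
      exact ((hu (t - s)).comp s ((hasDerivAt_id s).const_sub t)).congr_deriv (by ring)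
    exact (hexp.mul hshift).neg.congr_deriv (by ring)
  have hdecay : Tendsto (fun s => -(Real.exp (-γ * s) * u (t - s))) atTop (𝓝 0) := by
    have hexp : Tendsto (fun s => Real.exp (-γ * s)) atTop (𝓝 0) :=
      Real.tendsto_exp_atBot.comp (tendsto_id.const_mul_atTop_of_neg (by linarith))
    refine squeeze_zero_norm (fun s => ?_) (by simpa only [zero_mul] using hexp.mul_const Cu)
    rw [norm_neg, Real.norm_eq_abs, abs_mul, abs_of_pos (Real.exp_pos _)]
    exact mul_le_mul_of_nonneg_left (hCu _) (Real.exp_pos _).le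
  rw [integral_Ioi_of_hasDerivAt_of_tendsto' (fun s _ => hderiv s)
    (integrableOn_Ioi_comp_sub_mul_exp hγ (measurable_of_forall_hasDerivAt_sub_mul hu) hCg t)
    hdecay]
  simp

end LinearRelaxation

theorem stmt13_general
    (F : ℝ → ℝ) (hFb : ∃ C, ∀ y, |F y| ≤ C)
    (αI αE βE KE γM γI γE νE νM τI τM : ℝ)
    (hγM : 0 < γM) (hγI : 0 < γI)
    (M I E : ℝ → ℝ)
    (hMb : ∃ C, ∀ t, |M t| ≤ C) (hIb : ∃ C, ∀ t, |I t| ≤ C)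
    (hM : ∀ t : ℝ, HasDerivAt M
      (F (Real.exp (-νE * τM) * E (t - τM)) - γM * M t) t)
    (hI : ∀ t : ℝ, HasDerivAt I
      (αI * M (t - τI) * Real.exp (-νM * τI) - γI * I t) t)
    (hE : ∀ t : ℝ, HasDerivAt E
      (αE * I t - βE * I t * E t / (KE + E t) - γE * E t) t) :
    ∀ t : ℝ, HasDerivAt E
      ((∫ θ in Set.Ioi (0 : ℝ),
          αI * (∫ φ in Set.Ioi (0 : ℝ),
              F (Real.exp (-νE * τM) * E (t - θ - φ - τI - τM))
                * Real.exp (-γM * φ))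
            * Real.exp (-νM * τI) * Real.exp (-γI * θ))
          * (αE - βE * E t / (KE + E t))
        - γE * E t) t := by
  intro t
  obtain ⟨CF, hCF⟩ := hFb
  obtain ⟨CM, hCM⟩ := hMb
  have hMrep :=
    eq_integral_Ioi_of_forall_hasDerivAt_sub_mul hγM hM ⟨CM, hCM⟩ ⟨CF, fun _ => hCF _⟩
  have hIforcing : ∀ s, |αI * M (s - τI) * Real.exp (-νM * τI)|
      ≤ |αI| * CM * Real.exp (-νM * τI) := fun s => by
    rw [abs_mul, abs_mul, abs_of_pos (Real.exp_pos _)]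
    gcongr
    exact hCM _
  have hIrep := eq_integral_Ioi_of_forall_hasDerivAt_sub_mul hγI hI hIb ⟨_, hIforcing⟩ t
  have hJ : (∫ θ in Ioi (0 : ℝ),
      αI * (∫ φ in Ioi (0 : ℝ),
          F (Real.exp (-νE * τM) * E (t - θ - φ - τI - τM)) * Real.exp (-γM * φ))
        * Real.exp (-νM * τI) * Real.exp (-γI * θ)) = I t := by
    rw [hIrep]
    refine setIntegral_congr_fun measurableSet_Ioi fun θ _ => ?_
    rw [hMrep (t - θ - τI)]
    congr 4 with φ
    ring_nf
  convert hE t using 1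
  rw [hJ]
  ring

/-- The Yildirim et al. delayed lac-operon model: bounded solutions of the
three discrete-delay equations for mRNA `M`, intermediate protein `I` and
effector `E` reduce to a single scalar distributed DDE for `E`. -/
theorem stmt13
    (F : ℝ → ℝ) (hF : Continuous F) (hFb : ∃ C, ∀ y, |F y| ≤ C)
    (αI αE βE KE γM γI γE νE νM τI τM : ℝ)
    (hαI : 0 < αI) (hαE : 0 < αE) (hβE : 0 < βE) (hKE : 0 < KE)
    (hγM : 0 < γM) (hγI : 0 < γI) (hγE : 0 < γE)
    (hνE : 0 ≤ νE) (hνM : 0 ≤ νM) (hτI : 0 ≤ τI) (hτM : 0 ≤ τM)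
    (M I E : ℝ → ℝ)
    (hMb : ∃ C, ∀ t, |M t| ≤ C) (hIb : ∃ C, ∀ t, |I t| ≤ C)
    (hEb : ∃ C, ∀ t, |E t| ≤ C)
    (hEpos : ∀ t, 0 < KE + E t)
    (hM : ∀ t : ℝ, HasDerivAt M
      (F (Real.exp (-νE * τM) * E (t - τM)) - γM * M t) t)
    (hI : ∀ t : ℝ, HasDerivAt I
      (αI * M (t - τI) * Real.exp (-νM * τI) - γI * I t) t)
    (hE : ∀ t : ℝ, HasDerivAt E
      (αE * I t - βE * I t * E t / (KE + E t) - γE * E t) t) :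
    ∀ t : ℝ, HasDerivAt E
      ((∫ θ in Set.Ioi (0 : ℝ),
          αI * (∫ φ in Set.Ioi (0 : ℝ),
              F (Real.exp (-νE * τM) * E (t - θ - φ - τI - τM))
                * Real.exp (-γM * φ))
            * Real.exp (-νM * τI) * Real.exp (-γI * θ))
          * (αE - βE * E t / (KE + E t))
        - γE * E t) t :=
  stmt13_general F hFb αI αE βE KE γM γI γE νE νM τI τM hγM hγI M I E hMb hIb hM hI hE
end

section
/- Let p_1, p_2, a_1, a_2, k > 0 and define h_1(y) = 2 p_1 (1 - a_1/(1 + k y)) and h_2(y) = p_2 (2 a_2/(1 + k y) - 1). Let u_1, u_3 : ℝ → ℝ be bounded continuous functions with u_3(t) ≥ 0 for all t, and suppose there exists c > 0 such that h_2(u_3(x)) ≤ -c for all x ∈ ℝ. Define u_2 : ℝ → ℝ by u_2(t) = ∫_0^∞ h_1(u_3(t - σ)) u_1(t - σ) exp( ∫_{t-σ}^t h_2(u_3(x)) dx ) dσ. Then u_2 is differentiable and for every t ∈ ℝ, u_2'(t) = h_1(u_3(t)) u_1(t) + h_2(u_3(t)) u_2(t); that is, u_2 satisfies the middle equation u_2'(t)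 = (2 a_2/(1 + k u_3(t)) - 1) p_2 u_2(t) + 2 (1 - a_1/(1 + k u_3(t))) p_1 u_1(t) of the Knauer et al. white blood cell model. -/
open MeasureTheory Set

set_option maxHeartbeats 1000000 in
/-- The intermediate maturation compartment of the Knauer et al. white blood
cell model: the distributed delay integral of the influx `h₁(u₃)u₁` weighted by
the state-dependent expansion/contraction factor satisfies the middle
compartment equation `u₂' = h₁(u₃)u₁ + h₂(u₃)u₂`. -/
theorem stmt16
    (p₁ p₂ a₁ a₂ k : ℝ)
    (hp₁ : 0 < p₁) (hp₂ : 0 < p₂) (ha₁ : 0 < a₁) (ha₂ : 0 < a₂) (hk : 0 < k)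
    (h₁ h₂ : ℝ → ℝ)
    (hh₁ : ∀ y, h₁ y = 2 * p₁ * (1 - a₁ / (1 + k * y)))
    (hh₂ : ∀ y, h₂ y = p₂ * (2 * a₂ / (1 + k * y) - 1))
    (u₁ u₃ : ℝ → ℝ)
    (hu₁b : ∃ C, ∀ t, |u₁ t| ≤ C) (hu₁c : Continuous u₁)
    (hu₃b : ∃ C, ∀ t, |u₃ t| ≤ C) (hu₃c : Continuous u₃)
    (hu₃nn : ∀ t, 0 ≤ u₃ t)
    (c : ℝ) (hc : 0 < c) (hdecay : ∀ x : ℝ, h₂ (u₃ x) ≤ -c)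
    (u₂ : ℝ → ℝ)
    (hu₂ : ∀ t : ℝ, u₂ t = ∫ σ in Set.Ioi (0 : ℝ),
      h₁ (u₃ (t - σ)) * u₁ (t - σ) * Real.exp (∫ x in (t - σ)..t, h₂ (u₃ x))) :
    ∀ t : ℝ,
      HasDerivAt u₂ (h₁ (u₃ t) * u₁ t + h₂ (u₃ t) * u₂ t) t ∧
      h₁ (u₃ t) * u₁ t + h₂ (u₃ t) * u₂ t
        = (2 * a₂ / (1 + k * u₃ t) - 1) * p₂ * u₂ t
          + 2 * (1 - a₁ / (1 + k * u₃ t)) * p₁ * u₁ t := by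
  obtain ⟨C₁, hC₁⟩ := hu₁b
  have hC₁0 : 0 ≤ C₁ := le_trans (abs_nonneg _) (hC₁ 0)
  have hden : ∀ s : ℝ, (1:ℝ) ≤ 1 + k * u₃ s := fun s => by
    nlinarith [mul_nonneg hk.le (hu₃nn s)]
  have hden0 : ∀ s : ℝ, (0:ℝ) < 1 + k * u₃ s := fun s => lt_of_lt_of_le one_pos (hden s)
  have hdenc : Continuous fun s : ℝ => 1 + k * u₃ s :=
    continuous_const.add (continuous_const.mul hu₃c)
  have hcont2 : Continuous fun x : ℝ => h₂ (u₃ x) := by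
    have e2 : (fun x : ℝ => h₂ (u₃ x)) = fun x => p₂ * (2 * a₂ / (1 + k * u₃ x) - 1) :=
      funext fun x => hh₂ _
    rw [e2]
    exact continuous_const.mul
      (((continuous_const.div hdenc fun x => (hden0 x).ne').sub continuous_const))
  have hcont1 : Continuous fun x : ℝ => h₁ (u₃ x) := by
    have e1 : (fun x : ℝ => h₁ (u₃ x)) = fun x => 2 * p₁ * (1 - a₁ / (1 + k * u₃ x)) :=
      funext fun x => hh₁ _
    rw [e1]
    exact continuous_const.mul
      (continuous_const.sub (continuous_const.div hdenc fun x => (hden0 x).ne'))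
  -- uniform bound on h₁(u₃ s) * u₁ s
  set M : ℝ := 2 * p₁ * (1 + a₁) * C₁ with hM
  have hgbd : ∀ s : ℝ, |h₁ (u₃ s) * u₁ s| ≤ M := by
    intro s
    have hq1 : 0 < a₁ / (1 + k * u₃ s) := div_pos ha₁ (hden0 s)
    have hq2 : a₁ / (1 + k * u₃ s) ≤ a₁ := div_le_self ha₁.le (hden s)
    have habs : |1 - a₁ / (1 + k * u₃ s)| ≤ 1 + a₁ := by
      rw [abs_le]; constructor <;> nlinarith
    rw [abs_mul, hh₁, abs_mul, abs_of_pos (by positivity : (0:ℝ) < 2 * p₁)]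
    calc 2 * p₁ * |1 - a₁ / (1 + k * u₃ s)| * |u₁ s|
        ≤ 2 * p₁ * (1 + a₁) * C₁ := by
          apply mul_le_mul _ (hC₁ s) (abs_nonneg _) (by positivity)
          exact mul_le_mul_of_nonneg_left habs (by positivity)
      _ = M := rfl
  -- the antiderivative of h₂ ∘ u₃
  set H : ℝ → ℝ := fun r => ∫ x in (0:ℝ)..r, h₂ (u₃ x) with hHdef
  have hH : ∀ r : ℝ, HasDerivAt H (h₂ (u₃ r)) r := by
    intro r
    rw [hHdef]
    exact intervalIntegral.integral_hasDerivAt_right (hcont2.intervalIntegrable _ _)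
      (hcont2.stronglyMeasurableAtFilter _ _) hcont2.continuousAt
  have hHc : Continuous H := by
    rw [continuous_iff_continuousAt]; exact fun r => (hH r).continuousAt
  have hsplit : ∀ r s : ℝ, H r - H s = ∫ x in s..r, h₂ (u₃ x) := fun r s =>
    intervalIntegral.integral_interval_sub_left (hcont2.intervalIntegrable _ _)
      (hcont2.intervalIntegrable _ _)
  have hHineq : ∀ s r : ℝ, s ≤ r → H r - H s ≤ -c * (r - s) := by
    intro s r hsr
    rw [hsplit]
    calc (∫ x in s..r, h₂ (u₃ x)) ≤ ∫ _x in s..r, (-c : ℝ) := by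
          apply intervalIntegral.integral_mono_on hsr (hcont2.intervalIntegrable _ _)
            intervalIntegrable_const (fun x _ => hdecay x)
      _ = -c * (r - s) := by
          rw [intervalIntegral.integral_const, smul_eq_mul]; ring
  -- the kernel
  set φ : ℝ → ℝ := fun s => h₁ (u₃ s) * u₁ s * Real.exp (-H s) with hφdef
  have hφc : Continuous φ := (hcont1.mul hu₁c).mul (Real.continuous_exp.comp hHc.neg)
  -- integrability of φ on half lines
  have hexpint : ∀ r : ℝ, IntegrableOn (fun s => Real.exp (c * s)) (Iio r) := by
    intro r
    rw [show (volume : Measure ℝ) = Measure.map Neg.neg volume from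
      (Measure.map_neg_eq_self _).symm]
    rw [MeasurableEmbedding.integrableOn_map_iff measurableEmbedding_neg]
    have hpre : (Neg.neg ⁻¹' Iio r : Set ℝ) = Ioi (-r) := by ext x; simp
    rw [hpre]
    have := exp_neg_integrableOn_Ioi (-r) hc
    simpa [Function.comp_def, mul_neg, neg_mul] using this
  have hφint : ∀ r : ℝ, IntegrableOn φ (Iic r) := by
    intro r
    rw [integrableOn_Iic_iff_integrableOn_Iio]
    refine Integrable.mono'
      ((hexpint r).const_mul (M * Real.exp (-H r) * Real.exp (-(c * r))))
      (hφc.aestronglyMeasurable.restrict) ?_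
    rw [ae_restrict_iff' measurableSet_Iio]
    filter_upwards with s hs
    have h1 : -H s ≤ -H r + -(c * r) + c * s := by
      have := hHineq s r hs.le; linarith
    have h2 : Real.exp (-H s) ≤ Real.exp (-H r) * Real.exp (-(c * r)) * Real.exp (c * s) := by
      rw [← Real.exp_add, ← Real.exp_add]; exact Real.exp_le_exp.mpr h1
    have h3 : ‖φ s‖ = |h₁ (u₃ s) * u₁ s| * Real.exp (-H s) := by
      rw [hφdef]; simp [abs_mul, abs_of_pos (Real.exp_pos _)]
    rw [h3]
    calc |h₁ (u₃ s) * u₁ s| * Real.exp (-H s)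
        ≤ M * (Real.exp (-H r) * Real.exp (-(c * r)) * Real.exp (c * s)) := by
          apply mul_le_mul (hgbd s) h2 (Real.exp_pos _).le
          calc (0:ℝ) ≤ |h₁ (u₃ s) * u₁ s| := abs_nonneg _
            _ ≤ M := hgbd s
      _ = M * Real.exp (-H r) * Real.exp (-(c * r)) * Real.exp (c * s) := by ring
  -- the primitive F
  set F : ℝ → ℝ := fun r => ∫ s in Iic r, φ s with hFdef
  have hFkey : ∀ r : ℝ, F r = F 0 + ∫ x in (0:ℝ)..r, φ x := by
    intro r
    have := intervalIntegral.integral_Iic_sub_Iic (hφint 0) (hφint r)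
    rw [hFdef]; simp only []
    linarith [this]
  have hFder : ∀ r : ℝ, HasDerivAt F (φ r) r := by
    intro r
    have hd := intervalIntegral.integral_hasDerivAt_right (hφc.intervalIntegrable 0 r)
      (hφc.stronglyMeasurableAtFilter _ _) hφc.continuousAt
    have hFr : F = fun u => F 0 + ∫ x in (0:ℝ)..u, φ x := funext hFkey
    rw [hFr]
    exact hd.const_add (F 0)
  -- representation of u₂
  have hrep : ∀ r : ℝ, u₂ r = Real.exp (H r) * F r := by
    intro r
    rw [hu₂ r]
    have step1 : EqOn (fun σ : ℝ => h₁ (u₃ (r - σ)) * u₁ (r - σ) *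
        Real.exp (∫ x in (r - σ)..r, h₂ (u₃ x)))
        (fun σ : ℝ => Real.exp (H r) * φ (r - σ)) (Ioi 0) := by
      intro σ _
      simp only []
      rw [← hsplit r (r - σ),
        show H r - H (r - σ) = H r + -(H (r - σ)) by ring, Real.exp_add, hφdef]
      ring
    rw [setIntegral_congr_fun measurableSet_Ioi step1, integral_const_mul]
    congr 1
    have emb : MeasurableEmbedding (fun σ : ℝ => r - σ) :=
      (Homeomorph.subLeft r).isClosedEmbedding.measurableEmbedding
    have hmap : Measure.map (fun σ : ℝ => r - σ) (volume : Measure ℝ) = volume :=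
      Measure.map_sub_left_eq_self volume r
    have hcv := emb.setIntegral_map (μ := volume) φ (Iio r)
    rw [hmap] at hcv
    have hpre : (fun σ : ℝ => r - σ) ⁻¹' Iio r = Ioi 0 := by
      ext σ; simp [sub_lt_self_iff]
    rw [hpre] at hcv
    rw [← hcv, hFdef]
    exact integral_Iic_eq_integral_Iio.symm
  -- conclusion
  intro t
  constructor
  · have hd := ((hH t).exp.mul (hFder t))
    have hu2f : u₂ =ᶠ[nhds t] fun r => Real.exp (H r) * F r :=
      Filter.Eventually.of_forall hrep
    have hd2 := hd.congr_of_eventuallyEq hu2f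
    have hxe : Real.exp (H t) * Real.exp (-H t) = 1 := by
      rw [← Real.exp_add, add_neg_cancel, Real.exp_zero]
    have hval : Real.exp (H t) * h₂ (u₃ t) * F t + Real.exp (H t) * φ t
        = h₁ (u₃ t) * u₁ t + h₂ (u₃ t) * u₂ t := by
      rw [hrep t, hφdef]
      simp only []
      linear_combination (h₁ (u₃ t) * u₁ t) * hxe
    rw [← hval]
    exact hd2
  · rw [hh₁, hh₂]; ring
end

section
/- Let p_1, p_2, d_3, k > 0, a_1 > 1/2, and 0 < a_2 < a_1. Define h_1(y) = 2 p_1 (1 - a_1/(1 + k y)) and h_2(y) = p_2 (2 a_2/(1 + k y) - 1). For constants u_1*, u_3* with u_3* ≥ 0, say (u_1*, u_3*) is an equilibrium of the reduced Knauer system if (2 a_1/(1 + k u_3*) - 1) p_1 u_1* = 0 and 2 p_2 (1 - a_2/(1 + k u_3*)) · ∫_0^∞ h_1(u_3*) u_1* e^{h_2(u_3*) σ} dσ - d_3 u_3* = 0 (the integral being required to converge, which holds in all cases below). Then (u_1*, u_3*) is an equilibrium of the reduced Knauer system if and only if either (u_1*, u_3*) = (0, 0), or u_3* = (2 a_1 -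 1)/k and u_1* = d_3 u_3* (1 - a_2/a_1) / ( p_1 (2 - a_2/a_1) ). -/
/-!
The `u₁`-equation forces `u₁ = 0` or `1 + k u₃ = 2 a₁`. If `u₁ = 0` the integral vanishes and
`d₃ u₃ = 0`. On the level `1 + k u₃ = 2 a₁` one has `h₁(u₃) = p₁` and
`h₂(u₃) = -p₂ (1 - a₂/a₁) < 0` (this is where `a₂ < a₁` enters), so the integral converges to
`p₁ u₁ / (p₂ (1 - a₂/a₁))` and the `u₃`-equation is linear in `u₁`.
-/

open MeasureTheory Set

lemma div_sub_one_eq_zero_iff {K : Type*} [Field K] {x y : K} (hx : x ≠ 0) :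
    x / y - 1 = 0 ↔ y = x := by
  rcases eq_or_ne y 0 with rfl | hy
  · simp [hx.symm]
  · rw [sub_eq_zero, div_eq_one_iff_eq hy, eq_comm]

def IsReducedKnauerEquilibrium (p₁ p₂ d₃ k a₁ a₂ : ℝ) (h₁ h₂ : ℝ → ℝ) (u₁ u₃ : ℝ) : Prop :=
  (2 * a₁ / (1 + k * u₃) - 1) * p₁ * u₁ = 0 ∧
    IntegrableOn (fun σ : ℝ => h₁ u₃ * u₁ * Real.exp (h₂ u₃ * σ)) (Ioi 0) ∧
    2 * p₂ * (1 - a₂ / (1 + k * u₃))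
        * (∫ σ in Ioi (0 : ℝ), h₁ u₃ * u₁ * Real.exp (h₂ u₃ * σ)) - d₃ * u₃ = 0

section Equilibria

variable {p₁ p₂ d₃ k a₁ a₂ : ℝ} {h₁ h₂ : ℝ → ℝ} {u₁ u₃ : ℝ}

lemma isReducedKnauerEquilibrium_zero_left_iff (hd₃ : d₃ ≠ 0) :
    IsReducedKnauerEquilibrium p₁ p₂ d₃ k a₁ a₂ h₁ h₂ 0 u₃ ↔ u₃ = 0 := by
  simp [IsReducedKnauerEquilibrium, hd₃]

lemma isReducedKnauerEquilibrium_iff_of_one_add_mul_eq (hp₁ : 0 < p₁) (hp₂ : 0 < p₂)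
    (ha₁ : 0 < a₁) (ha₂ : a₂ < a₁)
    (hh₁ : ∀ y, h₁ y = 2 * p₁ * (1 - a₁ / (1 + k * y)))
    (hh₂ : ∀ y, h₂ y = p₂ * (2 * a₂ / (1 + k * y) - 1))
    (hlevel : 1 + k * u₃ = 2 * a₁) :
    IsReducedKnauerEquilibrium p₁ p₂ d₃ k a₁ a₂ h₁ h₂ u₁ u₃ ↔
      u₁ = d₃ * u₃ * (1 - a₂ / a₁) / (p₁ * (2 - a₂ / a₁)) := by
  have hr : a₂ / a₁ < 1 := (div_lt_one ha₁).2 ha₂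
  have hh₁u : h₁ u₃ = p₁ := by
    rw [hh₁, hlevel]; field_simp; ring
  have hh₂u : h₂ u₃ = -(p₂ * (1 - a₂ / a₁)) := by
    rw [hh₂, hlevel]; field_simp; ring
  have hdecay : h₂ u₃ < 0 := by rw [hh₂u]; nlinarith
  have hintegrable : IntegrableOn (fun σ : ℝ => h₁ u₃ * u₁ * Real.exp (h₂ u₃ * σ)) (Ioi 0) :=
    (integrableOn_exp_mul_Ioi hdecay 0).const_mul _
  have hintegral : ∫ σ in Ioi (0 : ℝ), h₁ u₃ * u₁ * Real.exp (h₂ u₃ * σ)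
      = p₁ * u₁ / (p₂ * (1 - a₂ / a₁)) := by
    rw [integral_const_mul, integral_exp_mul_Ioi hdecay, hh₁u, hh₂u]
    simp [div_eq_mul_inv]
  have hfirst : (2 * a₁ / (1 + k * u₃) - 1) * p₁ * u₁ = 0 := by
    rw [hlevel, div_self (by positivity), sub_self, zero_mul, zero_mul]
  have hhalf : a₂ / (2 * a₁) = a₂ / a₁ / 2 := by ring
  have hne₁ : 1 - a₂ / a₁ ≠ 0 := by linarith
  have hne₂ : 2 - a₂ / a₁ ≠ 0 := by linarith
  rw [IsReducedKnauerEquilibrium, hintegral, and_iff_right hfirst, and_iff_right hintegrable,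
    hlevel, hhalf]
  generalize a₂ / a₁ = r at hne₁ hne₂ ⊢
  rw [eq_div_iff (mul_ne_zero hp₁.ne' hne₂)]
  field_simp
  constructor <;> intro h <;> linear_combination h

end Equilibria

theorem stmt17_general
    (p₁ p₂ d₃ k a₁ a₂ : ℝ)
    (hp₁ : 0 < p₁) (hp₂ : 0 < p₂) (hd₃ : 0 < d₃) (hk : 0 < k)
    (ha₁ : 1 / 2 < a₁) (ha₂ : a₂ < a₁)
    (h₁ h₂ : ℝ → ℝ)
    (hh₁ : ∀ y, h₁ y = 2 * p₁ * (1 - a₁ / (1 + k * y)))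
    (hh₂ : ∀ y, h₂ y = p₂ * (2 * a₂ / (1 + k * y) - 1))
    (u₁s u₃s : ℝ) :
    ((2 * a₁ / (1 + k * u₃s) - 1) * p₁ * u₁s = 0 ∧
      IntegrableOn (fun σ : ℝ => h₁ u₃s * u₁s * Real.exp (h₂ u₃s * σ))
        (Set.Ioi 0) ∧
      2 * p₂ * (1 - a₂ / (1 + k * u₃s))
          * (∫ σ in Set.Ioi (0 : ℝ), h₁ u₃s * u₁s * Real.exp (h₂ u₃s * σ))
        - d₃ * u₃s = 0)
    ↔ ((u₁s = 0 ∧ u₃s = 0) ∨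
        (u₃s = (2 * a₁ - 1) / k ∧
          u₁s = d₃ * u₃s * (1 - a₂ / a₁) / (p₁ * (2 - a₂ / a₁)))) := by
  have ha₁pos : 0 < a₁ := by linarith
  have hlevel : 1 + k * u₃s = 2 * a₁ ↔ u₃s = (2 * a₁ - 1) / k := by
    rw [eq_div_iff hk.ne']
    constructor <;> intro h <;> linarith
  change IsReducedKnauerEquilibrium p₁ p₂ d₃ k a₁ a₂ h₁ h₂ u₁s u₃s ↔ _
  constructor
  · intro h
    have hfirst := h.1
    rw [mul_assoc, mul_eq_zero, mul_eq_zero, div_sub_one_eq_zero_iff (by positivity)] at hfirst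
    obtain hlevel' | hp₁0 | rfl := hfirst
    · exact Or.inr ⟨hlevel.1 hlevel', (isReducedKnauerEquilibrium_iff_of_one_add_mul_eq
        hp₁ hp₂ ha₁pos ha₂ hh₁ hh₂ hlevel').1 h⟩
    · exact absurd hp₁0 hp₁.ne'
    · exact Or.inl ⟨rfl, (isReducedKnauerEquilibrium_zero_left_iff hd₃.ne').1 h⟩
  · rintro (⟨rfl, rfl⟩ | ⟨hu₃, hu₁⟩)
    · exact (isReducedKnauerEquilibrium_zero_left_iff hd₃.ne').2 rfl
    · exact (isReducedKnauerEquilibrium_iff_of_one_add_mul_eq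
        hp₁ hp₂ ha₁pos ha₂ hh₁ hh₂ (hlevel.2 hu₃)).2 hu₁

/-- Equilibria of the reduced Knauer et al. white blood cell system: the only
equilibria are the trivial one `(0,0)` and the positive equilibrium
`u₃* = (2a₁-1)/k`, `u₁* = d₃ u₃* (1 - a₂/a₁)/(p₁(2 - a₂/a₁))`. -/
theorem stmt17
    (p₁ p₂ d₃ k a₁ a₂ : ℝ)
    (hp₁ : 0 < p₁) (hp₂ : 0 < p₂) (hd₃ : 0 < d₃) (hk : 0 < k)
    (ha₁ : 1 / 2 < a₁) (ha₂pos : 0 < a₂) (ha₂ : a₂ < a₁)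
    (h₁ h₂ : ℝ → ℝ)
    (hh₁ : ∀ y, h₁ y = 2 * p₁ * (1 - a₁ / (1 + k * y)))
    (hh₂ : ∀ y, h₂ y = p₂ * (2 * a₂ / (1 + k * y) - 1))
    (u₁s u₃s : ℝ) (hu₃s : 0 ≤ u₃s) :
    ((2 * a₁ / (1 + k * u₃s) - 1) * p₁ * u₁s = 0 ∧
      IntegrableOn (fun σ : ℝ => h₁ u₃s * u₁s * Real.exp (h₂ u₃s * σ))
        (Set.Ioi 0) ∧
      2 * p₂ * (1 - a₂ / (1 + k * u₃s))
          * (∫ σ in Set.Ioi (0 : ℝ), h₁ u₃s * u₁s * Real.exp (h₂ u₃s * σ))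
        - d₃ * u₃s = 0)
    ↔ ((u₁s = 0 ∧ u₃s = 0) ∨
        (u₃s = (2 * a₁ - 1) / k ∧
          u₁s = d₃ * u₃s * (1 - a₂ / a₁) / (p₁ * (2 - a₂ / a₁)))) :=
  stmt17_general p₁ p₂ d₃ k a₁ a₂ hp₁ hp₂ hd₃ hk ha₁ ha₂ h₁ h₂ hh₁ hh₂ u₁s u₃s
end
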